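/- arXiv:2108.11730 — 4 statements merged into one kernel-verified Lean document; each statement's English description precedes it below -/
import Mathlib

section
/- Let b > 0 and μ ∈ ℝ. Then the mean of the folded Laplace distribution satisfies ∫_ℝ |t| · (1/(2b)) · exp(−|t − μ|/b) dt = |μ| + b · exp(−|μ|/b). -/
open MeasureTheory Real Set Filter Topology

/-- Key improper integral: `∫_{a}^∞ t e^{-t/r} dt = (ra + r²) e^{-a/r}` for `a ≥ 0`. -/
lemma key_tendsto (r : ℝ) (hr : 0 < r) :
    Tendsto (fun x : ℝ => -(r * x + r ^ 2) * Real.exp (-x / r)) atTop (𝓝 0) := by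
  have h1 : Tendsto (fun u : ℝ => -(r ^ 2 * (u * Real.exp (-u) + Real.exp (-u))))
      atTop (𝓝 0) := by
    have := ((Real.tendsto_pow_mul_exp_neg_atTop_nhds_zero 1).add
      Real.tendsto_exp_neg_atTop_nhds_zero).const_mul (r ^ 2)
    simpa using this.neg
  have h2 : Tendsto (fun x : ℝ => x / r) atTop atTop :=
    tendsto_id.atTop_div_const hr
  have h3 := h1.comp h2
  refine h3.congr fun x => ?_
  simp only [Function.comp_apply]
  have hx : -(x / r) = -x / r := (neg_div r x).symm
  rw [hx]
  field_simp

lemma key_deriv (r : ℝ) (hr : 0 < r) (x : ℝ) :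
    HasDerivAt (fun t : ℝ => -(r * t + r ^ 2) * Real.exp (-t / r))
      (x * Real.exp (-x / r)) x := by
  have h1 : HasDerivAt (fun t : ℝ => -(r * t + r ^ 2)) (-r) x := by
    simpa using (((hasDerivAt_id x).const_mul r).add_const (r ^ 2)).fun_neg
  have h0 : HasDerivAt (fun t : ℝ => -t / r) (-1 / r) x := by
    simpa using (hasDerivAt_id x).neg.div_const r
  have h2 : HasDerivAt (fun t : ℝ => Real.exp (-t / r))
      (Real.exp (-x / r) * (-1 / r)) x := (Real.hasDerivAt_exp _).comp x h0
  have := h1.fun_mul h2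
  refine this.congr_deriv ?_
  field_simp
  ring

lemma key_integrable (r a : ℝ) (hr : 0 < r) (ha : 0 ≤ a) :
    IntegrableOn (fun t : ℝ => t * Real.exp (-t / r)) (Set.Ioi a) := by
  refine integrableOn_Ioi_deriv_of_nonneg' (g := fun t => -(r * t + r ^ 2) * Real.exp (-t / r))
    (fun x _ => key_deriv r hr x) (fun x hx => ?_) (key_tendsto r hr)
  exact mul_nonneg (le_of_lt (lt_of_le_of_lt ha hx)) (Real.exp_pos _).le

lemma key_integral (r a : ℝ) (hr : 0 < r) (ha : 0 ≤ a) :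
    ∫ t in Set.Ioi a, t * Real.exp (-t / r) = (r * a + r ^ 2) * Real.exp (-a / r) := by
  have := integral_Ioi_of_hasDerivAt_of_nonneg'
    (g := fun t => -(r * t + r ^ 2) * Real.exp (-t / r))
    (fun x _ => key_deriv r hr x)
    (fun x hx => mul_nonneg (le_of_lt (lt_of_le_of_lt ha hx)) (Real.exp_pos _).le)
    (key_tendsto r hr)
  rw [this]
  ring

/-- Integrability transfer under negation. -/
lemma integrableOn_Iic_of_comp_neg {f : ℝ → ℝ} {c : ℝ}
    (hf : IntegrableOn (fun x => f (-x)) (Set.Ioi (-c))) : IntegrableOn f (Set.Iic c) := by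
  have A : MeasurableEmbedding fun x : ℝ => -x :=
    (Homeomorph.neg ℝ).isClosedEmbedding.measurableEmbedding
  have hmap : (volume : Measure ℝ).restrict (Set.Iic c)
      = Measure.map (fun x : ℝ => -x) (volume.restrict (Set.Ici (-c))) := by
    conv_lhs => rw [← Measure.map_neg_eq_self (volume : Measure ℝ)]
    rw [Measure.restrict_map A.measurable measurableSet_Iic]
    congr 1
    ext x
    simp [neg_le]
  unfold IntegrableOn
  rw [hmap, A.integrable_map_iff]
  have : IntegrableOn (fun x => f (-x)) (Set.Ici (-c)) := by
    rwa [integrableOn_Ici_iff_integrableOn_Ioi]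
  exact this

theorem folded_laplace_mean_nonneg (b μ : ℝ) (hb : 0 < b) (hμ : 0 ≤ μ) :
    ∫ t : ℝ, |t| * (1 / (2 * b)) * Real.exp (-|t - μ| / b) =
      μ + b * Real.exp (-μ / b) := by
  set c : ℝ := 1 / (2 * b) with hc
  set f : ℝ → ℝ := fun t => |t| * c * Real.exp (-|t - μ| / b) with hf
  have hbne : b ≠ 0 := ne_of_gt hb
  have hcont : Continuous f := by
    apply Continuous.mul (continuous_abs.mul continuous_const)
    exact Real.continuous_exp.comp
      (((continuous_abs.comp (continuous_id.sub continuous_const)).neg).div_const b)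
  -- the integrand on `Iic 0`, precomposed with negation
  have hNegEq : ∀ x ∈ Set.Ioi (0 : ℝ),
      f (-x) = (c * Real.exp (-μ / b)) * (x * Real.exp (-x / b)) := by
    intro x hx
    have hx0 : (0 : ℝ) < x := hx
    have h1 : |(-x)| = x := by rw [abs_neg, abs_of_pos hx0]
    have h2 : |(-x) - μ| = x + μ := by
      rw [abs_of_nonpos (by linarith)]; ring
    simp only [hf, h1, h2]
    rw [show -(x + μ) / b = -μ / b + -x / b by ring, Real.exp_add]
    ring
  -- the integrand on `Ioi μ`
  have hIoiEq : ∀ x ∈ Set.Ioi μ,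
      f x = (c * Real.exp (μ / b)) * (x * Real.exp (-x / b)) := by
    intro x hx
    have hx0 : (0 : ℝ) < x := lt_of_le_of_lt hμ hx
    have h1 : |x| = x := abs_of_pos hx0
    have h2 : |x - μ| = x - μ := abs_of_nonneg (by simp only [Set.mem_Ioi] at hx; linarith)
    simp only [hf, h1, h2]
    rw [show -(x - μ) / b = μ / b + -x / b by ring, Real.exp_add]
    ring
  -- integrability pieces
  have hInt_Ioi : IntegrableOn f (Set.Ioi μ) := by
    refine (IntegrableOn.congr_fun ?_ (fun x hx => (hIoiEq x hx).symm) measurableSet_Ioi)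
    exact ((key_integrable b μ hb hμ).const_mul _)
  have hInt_neg : IntegrableOn (fun x => f (-x)) (Set.Ioi (0 : ℝ)) := by
    refine (IntegrableOn.congr_fun ?_ (fun x hx => (hNegEq x hx).symm) measurableSet_Ioi)
    exact ((key_integrable b 0 hb le_rfl).const_mul _)
  have hInt_Iic : IntegrableOn f (Set.Iic (0 : ℝ)) := by
    have := integrableOn_Iic_of_comp_neg (f := f) (c := (0 : ℝ)) (by simpa using hInt_neg)
    simpa using this
  have hInt_Ioc : IntegrableOn f (Set.Ioc 0 μ) := hcont.integrableOn_Ioc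
  have hInt_Ioi0 : IntegrableOn f (Set.Ioi (0 : ℝ)) := by
    rw [← Set.Ioc_union_Ioi_eq_Ioi hμ]
    exact hInt_Ioc.union hInt_Ioi
  -- compute the piece over `Iic 0`
  have hI1 : ∫ t in Set.Iic (0 : ℝ), f t = (c * Real.exp (-μ / b)) * b ^ 2 := by
    have h := integral_comp_neg_Ioi (0 : ℝ) f
    rw [neg_zero] at h
    rw [← h]
    rw [MeasureTheory.setIntegral_congr_fun measurableSet_Ioi hNegEq]
    rw [MeasureTheory.integral_const_mul, key_integral b 0 hb le_rfl]
    simp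
  -- compute the piece over `Ioi μ`
  have hI3 : ∫ t in Set.Ioi μ, f t = c * (b * μ + b ^ 2) := by
    rw [MeasureTheory.setIntegral_congr_fun measurableSet_Ioi hIoiEq]
    rw [MeasureTheory.integral_const_mul, key_integral b μ hb hμ]
    have h1 : Real.exp (μ / b) * Real.exp (-μ / b) = 1 := by
      rw [← Real.exp_add, show μ / b + -μ / b = 0 by ring, Real.exp_zero]
    linear_combination c * (b * μ + b ^ 2) * h1
  -- compute the piece over `Ioc 0 μ`
  have hI2 : ∫ t in Set.Ioc (0 : ℝ) μ, f t
      = (c * Real.exp (-μ / b)) * ((b * μ - b ^ 2) * Real.exp (μ / b) + b ^ 2) := by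
    have hEq : ∀ x ∈ Set.Ioc (0 : ℝ) μ,
        f x = (c * Real.exp (-μ / b)) * (x * Real.exp (x / b)) := by
      intro x hx
      obtain ⟨hx1, hx2⟩ := hx
      have h1 : |x| = x := abs_of_pos hx1
      have h2 : |x - μ| = μ - x := by rw [abs_of_nonpos (by linarith)]; ring
      simp only [hf, h1, h2]
      rw [show -(μ - x) / b = -μ / b + x / b by ring, Real.exp_add]
      ring
    rw [MeasureTheory.setIntegral_congr_fun measurableSet_Ioc hEq,
      MeasureTheory.integral_const_mul]
    congr 1
    rw [← intervalIntegral.integral_of_le hμ]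
    have hderiv : ∀ x ∈ Set.uIcc (0 : ℝ) μ,
        HasDerivAt (fun t : ℝ => (b * t - b ^ 2) * Real.exp (t / b))
          (x * Real.exp (x / b)) x := by
      intro x _
      have h1 : HasDerivAt (fun t : ℝ => b * t - b ^ 2) b x := by
        simpa using (((hasDerivAt_id x).const_mul b).sub_const (b ^ 2))
      have h0 : HasDerivAt (fun t : ℝ => t / b) (1 / b) x := by
        simpa using (hasDerivAt_id x).div_const b
      have h2 : HasDerivAt (fun t : ℝ => Real.exp (t / b))
          (Real.exp (x / b) * (1 / b)) x := (Real.hasDerivAt_exp _).comp x h0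
      have := h1.fun_mul h2
      refine this.congr_deriv ?_
      field_simp
      ring
    have hcont2 : Continuous fun x : ℝ => x * Real.exp (x / b) :=
      continuous_id.mul (Real.continuous_exp.comp (continuous_id.div_const b))
    rw [intervalIntegral.integral_eq_sub_of_hasDerivAt hderiv
      (hcont2.intervalIntegrable 0 μ)]
    simp
  -- put things together
  have hsplit : ∫ t : ℝ, f t
      = (∫ t in Set.Iic (0 : ℝ), f t) + ((∫ t in Set.Ioc (0 : ℝ) μ, f t)
        + ∫ t in Set.Ioi μ, f t) := by
    rw [← intervalIntegral.integral_Iic_add_Ioi hInt_Iic hInt_Ioi0]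
    congr 1
    rw [← MeasureTheory.setIntegral_union (Set.Ioc_disjoint_Ioi le_rfl)
      measurableSet_Ioi hInt_Ioc hInt_Ioi, Set.Ioc_union_Ioi_eq_Ioi hμ]
  have hexp : Real.exp (μ / b) * Real.exp (-μ / b) = 1 := by
    rw [← Real.exp_add, show μ / b + -μ / b = 0 by ring, Real.exp_zero]
  calc ∫ t : ℝ, f t
      = (c * Real.exp (-μ / b)) * b ^ 2
        + ((c * Real.exp (-μ / b)) * ((b * μ - b ^ 2) * Real.exp (μ / b) + b ^ 2)
          + c * (b * μ + b ^ 2)) := by rw [hsplit, hI1, hI2, hI3]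
    _ = μ + b * Real.exp (-μ / b) := by
        rw [hc]
        field_simp
        rw [neg_div] at hexp
        linear_combination (μ - b) * hexp

/-- The mean of the folded Laplace distribution:
`∫ |t| · (1/(2b)) · exp(−|t−μ|/b) dt = |μ| + b · exp(−|μ|/b)`. -/
theorem folded_laplace_mean (b μ : ℝ) (hb : 0 < b) :
    ∫ t : ℝ, |t| * (1 / (2 * b)) * Real.exp (-|t - μ| / b) =
      |μ| + b * Real.exp (-|μ| / b) := by
  rcases le_or_gt 0 μ with hμ | hμ
  · rw [abs_of_nonneg hμ]
    exact folded_laplace_mean_nonneg b μ hb hμ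
  · have h := folded_laplace_mean_nonneg b (-μ) hb (by linarith)
    have habs : |μ| = -μ := abs_of_neg hμ
    rw [habs]
    rw [← h]
    have A : MeasurableEmbedding fun x : ℝ => -x :=
      (Homeomorph.neg ℝ).isClosedEmbedding.measurableEmbedding
    have hmap := A.integral_map (μ := (volume : Measure ℝ))
      (g := fun t : ℝ => |t| * (1 / (2 * b)) * Real.exp (-|t - -μ| / b))
    rw [Measure.map_neg_eq_self (volume : Measure ℝ)] at hmap
    rw [hmap]
    congr 1
    funext x
    have : |(-x) - -μ| = |x - μ| := by rw [← abs_neg]; congr 1; ring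
    rw [this, abs_neg]
end

section
/- Let m be a positive integer, b* > 0, z* ∈ ℝᵐ, and let q(z) = (2b*)^{−m} · exp(−‖z − z*‖₁/b*) for z ∈ ℝᵐ. Then ∫_{ℝᵐ} ‖z‖₁ · q(z) dz = ‖z*‖₁ + b* · Σ_{i=1}^{m} exp(−|z*_i|/b*). -/
open MeasureTheory Real Finset Set Filter Topology

namespace LaplaceL1Aux

variable {b : ℝ}

lemma hasDerivAt_exp_neg_div (hb : 0 < b) (x : ℝ) :
    HasDerivAt (fun x : ℝ => Real.exp (-x / b)) (Real.exp (-x / b) * (-1 / b)) x :=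
  (Real.hasDerivAt_exp _).comp x ((hasDerivAt_id x).neg.div_const b)

lemma hasDerivAt_G (hb : 0 < b) (x : ℝ) :
    HasDerivAt (fun x : ℝ => -(b * (x + b)) * Real.exp (-x / b))
      (x * Real.exp (-x / b)) x := by
  have hb' : b ≠ 0 := hb.ne'
  have h2 := hasDerivAt_exp_neg_div hb x
  have h3 : HasDerivAt (fun x : ℝ => -(b * (x + b))) (-(b * 1)) x :=
    (((hasDerivAt_id x).add_const b).const_mul b).neg
  have h := h3.mul h2
  refine h.congr_deriv ?_
  field_simp
  ring

lemma tendsto_exp_neg_div (hb : 0 < b) :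
    Tendsto (fun x : ℝ => Real.exp (-x / b)) atTop (𝓝 0) := by
  have h1 : Tendsto (fun x : ℝ => x / b) atTop atTop := tendsto_id.atTop_div_const hb
  have h2 := Real.tendsto_exp_atBot.comp (tendsto_neg_atTop_atBot.comp h1)
  exact h2.congr fun x => by simp [Function.comp, neg_div]

lemma tendsto_mul_exp (hb : 0 < b) :
    Tendsto (fun x : ℝ => x * Real.exp (-x / b)) atTop (𝓝 0) := by
  have hb' : b ≠ 0 := hb.ne'
  have h1 : Tendsto (fun x : ℝ => x / b) atTop atTop := tendsto_id.atTop_div_const hb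
  have h2 := (Real.tendsto_pow_mul_exp_neg_atTop_nhds_zero 1).comp h1
  have h3 := h2.const_mul b
  rw [mul_zero] at h3
  refine h3.congr fun x => ?_
  simp only [Function.comp, pow_one]
  rw [show -(x / b) = -x / b by ring]
  field_simp

lemma tendsto_G (hb : 0 < b) :
    Tendsto (fun x : ℝ => -(b * (x + b)) * Real.exp (-x / b)) atTop (𝓝 0) := by
  have h := ((tendsto_mul_exp hb).const_mul (-b)).add
    ((tendsto_exp_neg_div hb).const_mul (-(b ^ 2)))
  simp only [mul_zero, add_zero] at h
  exact h.congr fun x => by ring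

lemma integrableOn_exp (hb : 0 < b) (c : ℝ) :
    IntegrableOn (fun x : ℝ => Real.exp (-x / b)) (Ioi c) := by
  have h := exp_neg_integrableOn_Ioi c (show (0:ℝ) < 1 / b by positivity)
  refine h.congr_fun (fun x _ => ?_) measurableSet_Ioi
  simp only
  rw [show -(1 / b) * x = -x / b by ring]

lemma integral_exp_Ioi (hb : 0 < b) (c : ℝ) :
    ∫ x in Ioi c, Real.exp (-x / b) = b * Real.exp (-c / b) := by
  have hb' : b ≠ 0 := hb.ne'
  have hd : ∀ x ∈ Ici c, HasDerivAt (fun x : ℝ => -b * Real.exp (-x / b))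
      (Real.exp (-x / b)) x := by
    intro x _
    have := (hasDerivAt_exp_neg_div hb x).const_mul (-b)
    refine this.congr_deriv ?_
    field_simp
  have ht : Tendsto (fun x : ℝ => -b * Real.exp (-x / b)) atTop (𝓝 0) := by
    have := (tendsto_exp_neg_div hb).const_mul (-b)
    simpa using this
  have h := integral_Ioi_of_hasDerivAt_of_tendsto' hd (integrableOn_exp hb c) ht
  rw [h]; ring

lemma integrableOn_xexp (hb : 0 < b) {c : ℝ} (hc : 0 ≤ c) :
    IntegrableOn (fun x : ℝ => x * Real.exp (-x / b)) (Ioi c) := by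
  refine integrableOn_Ioi_deriv_of_nonneg' (fun x _ => hasDerivAt_G hb x)
    (fun x hx => ?_) (tendsto_G hb)
  exact mul_nonneg (le_trans hc (le_of_lt hx)) (Real.exp_nonneg _)

lemma integral_xexp_Ioi (hb : 0 < b) {c : ℝ} (hc : 0 ≤ c) :
    ∫ x in Ioi c, x * Real.exp (-x / b) = b * (c + b) * Real.exp (-c / b) := by
  have h := integral_Ioi_of_hasDerivAt_of_tendsto' (fun x _ => hasDerivAt_G hb x)
    (integrableOn_xexp hb hc) (tendsto_G hb)
  rw [h]; ring

lemma integrableOn_Iic_comp_neg {f : ℝ → ℝ} {c : ℝ}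
    (h : IntegrableOn (fun x => f (-x)) (Ioi (-c))) : IntegrableOn f (Iic c) := by
  rw [← Measure.map_neg_eq_self (volume : Measure ℝ)]
  have m : MeasurableEmbedding fun x : ℝ => -x := (Homeomorph.neg ℝ).measurableEmbedding
  rw [m.integrableOn_map_iff]
  simp_rw [Function.comp_def, neg_preimage, neg_Iic]
  exact (integrableOn_Ici_iff_integrableOn_Ioi).mpr h

lemma integrable_exp_abs (hb : 0 < b) (μ : ℝ) :
    Integrable (fun x : ℝ => Real.exp (-|x - μ| / b)) := by
  have hIoi : IntegrableOn (fun x : ℝ => Real.exp (-|x| / b)) (Ioi 0) :=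
    (integrableOn_exp hb 0).congr_fun (fun x hx => by rw [abs_of_pos hx]) measurableSet_Ioi
  have hIic : IntegrableOn (fun x : ℝ => Real.exp (-|x| / b)) (Iic 0) := by
    apply integrableOn_Iic_comp_neg
    simpa [abs_neg] using hIoi
  have h0 : Integrable (fun x : ℝ => Real.exp (-|x| / b)) := by
    have := hIic.union hIoi
    rwa [Iic_union_Ioi, integrableOn_univ] at this
  simpa using h0.comp_sub_right μ

lemma integral_exp_abs (hb : 0 < b) (μ : ℝ) :
    ∫ x : ℝ, Real.exp (-|x - μ| / b) = 2 * b := by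
  calc ∫ x : ℝ, Real.exp (-|x - μ| / b)
      = ∫ x : ℝ, Real.exp (-|x| / b) :=
        integral_sub_right_eq_self (μ := volume) (fun y => Real.exp (-|y| / b)) μ
    _ = 2 * ∫ x in Ioi (0:ℝ), Real.exp (-x / b) :=
        integral_comp_abs (f := fun y => Real.exp (-y / b))
    _ = 2 * b := by
        rw [integral_exp_Ioi hb 0, show -(0:ℝ) / b = 0 by ring, Real.exp_zero, mul_one]

lemma moment_nonneg (hb : 0 < b) {μ : ℝ} (hμ : 0 ≤ μ) :
    Integrable (fun x : ℝ => |x| * Real.exp (-|x - μ| / b)) ∧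
    ∫ x : ℝ, |x| * Real.exp (-|x - μ| / b)
      = 2 * b * μ + 2 * b ^ 2 * Real.exp (-μ / b) := by
  have hb' : b ≠ 0 := hb.ne'
  -- piece A : Iic 0
  have hAeq : EqOn (fun x : ℝ => |x| * Real.exp (-|x - μ| / b))
      (fun x : ℝ => ((-x) * Real.exp (-(-x) / b)) * Real.exp (-μ / b)) (Iic 0) := by
    intro x hx
    have h1 : |x| = -x := abs_of_nonpos hx
    have h2 : |x - μ| = μ - x := by
      rw [abs_of_nonpos (by simp only [Set.mem_Iic] at hx; linarith : x - μ ≤ 0)]; ring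
    simp only [h1, h2, neg_neg, mul_assoc, ← Real.exp_add]
    rw [show x / b + -μ / b = -(μ - x) / b by ring]
  have hA_int : IntegrableOn (fun x : ℝ => |x| * Real.exp (-|x - μ| / b)) (Iic 0) := by
    refine IntegrableOn.congr_fun ?_ hAeq.symm measurableSet_Iic
    apply integrableOn_Iic_comp_neg
      (f := fun x : ℝ => ((-x) * Real.exp (-(-x) / b)) * Real.exp (-μ / b))
    simp only [neg_neg, neg_zero]
    exact ((integrableOn_xexp hb le_rfl).mul_const _)
  have hAval : ∫ x in Iic (0:ℝ), |x| * Real.exp (-|x - μ| / b)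
      = b ^ 2 * Real.exp (-μ / b) := by
    calc ∫ x in Iic (0:ℝ), |x| * Real.exp (-|x - μ| / b)
        = ∫ x in Iic (0:ℝ), ((-x) * Real.exp (-(-x) / b)) * Real.exp (-μ / b) :=
          setIntegral_congr_fun measurableSet_Iic hAeq
      _ = ∫ x in Ioi (-(0:ℝ)), (x * Real.exp (-x / b)) * Real.exp (-μ / b) :=
          integral_comp_neg_Iic 0 (fun y => (y * Real.exp (-y / b)) * Real.exp (-μ / b))
      _ = b ^ 2 * Real.exp (-μ / b) := by
          rw [neg_zero, integral_mul_const, integral_xexp_Ioi hb le_rfl,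
            show -(0:ℝ) / b = 0 by ring, Real.exp_zero]
          ring
  -- piece B1 : Ioc 0 μ
  have hB1eq : EqOn (fun x : ℝ => |x| * Real.exp (-|x - μ| / b))
      (fun x : ℝ => x * Real.exp ((x - μ) / b)) (Ioc 0 μ) := by
    intro x hx
    simp only
    rw [abs_of_pos hx.1, abs_of_nonpos (sub_nonpos.mpr hx.2), neg_neg]
  have hB1cont : Continuous (fun x : ℝ => x * Real.exp ((x - μ) / b)) := by
    continuity
  have hB1_int : IntegrableOn (fun x : ℝ => |x| * Real.exp (-|x - μ| / b)) (Ioc 0 μ) :=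
    IntegrableOn.congr_fun hB1cont.integrableOn_Ioc hB1eq.symm measurableSet_Ioc
  have hF : ∀ x ∈ uIcc (0:ℝ) μ,
      HasDerivAt (fun x : ℝ => b * (x - b) * Real.exp ((x - μ) / b))
        (x * Real.exp ((x - μ) / b)) x := by
    intro x _
    have h1 : HasDerivAt (fun x : ℝ => (x - μ) / b) (1 / b) x :=
      ((hasDerivAt_id x).sub_const μ).div_const b
    have h2 : HasDerivAt (fun x : ℝ => Real.exp ((x - μ) / b))
        (Real.exp ((x - μ) / b) * (1 / b)) x := (Real.hasDerivAt_exp _).comp x h1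
    have h3 : HasDerivAt (fun x : ℝ => b * (x - b)) (b * 1) x :=
      ((hasDerivAt_id x).sub_const b).const_mul b
    have h := h3.mul h2
    refine h.congr_deriv ?_
    field_simp
    ring
  have hB1val : ∫ x in Ioc (0:ℝ) μ, |x| * Real.exp (-|x - μ| / b)
      = b * (μ - b) + b ^ 2 * Real.exp (-μ / b) := by
    rw [setIntegral_congr_fun measurableSet_Ioc hB1eq, ← intervalIntegral.integral_of_le hμ,
      intervalIntegral.integral_eq_sub_of_hasDerivAt hF (hB1cont.intervalIntegrable 0 μ)]
    rw [sub_self, zero_div, Real.exp_zero, show ((0:ℝ) - μ) / b = -μ / b by ring]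
    ring
  -- piece B2 : Ioi μ
  have hB2eq : EqOn (fun x : ℝ => |x| * Real.exp (-|x - μ| / b))
      (fun x : ℝ => (x * Real.exp (-x / b)) * Real.exp (μ / b)) (Ioi μ) := by
    intro x hx
    have hx0 : 0 < x := lt_of_le_of_lt hμ hx
    simp only
    rw [abs_of_pos hx0, abs_of_pos (sub_pos.mpr hx), mul_assoc, ← Real.exp_add,
      show -x / b + μ / b = -(x - μ) / b by ring]
  have hB2_int : IntegrableOn (fun x : ℝ => |x| * Real.exp (-|x - μ| / b)) (Ioi μ) :=
    IntegrableOn.congr_fun ((integrableOn_xexp hb hμ).mul_const _) hB2eq.symm measurableSet_Ioi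
  have hB2val : ∫ x in Ioi μ, |x| * Real.exp (-|x - μ| / b) = b * (μ + b) := by
    rw [setIntegral_congr_fun measurableSet_Ioi hB2eq, integral_mul_const,
      integral_xexp_Ioi hb hμ, mul_assoc, ← Real.exp_add,
      show -μ / b + μ / b = 0 by ring, Real.exp_zero, mul_one]
  -- combine
  have hIic_int : IntegrableOn (fun x : ℝ => |x| * Real.exp (-|x - μ| / b)) (Iic μ) := by
    have := hA_int.union hB1_int
    rwa [Iic_union_Ioc_eq_Iic hμ] at this
  have h_int : Integrable (fun x : ℝ => |x| * Real.exp (-|x - μ| / b)) := by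
    have := hIic_int.union hB2_int
    rwa [Iic_union_Ioi, integrableOn_univ] at this
  refine ⟨h_int, ?_⟩
  have hsplit : ∫ x : ℝ, |x| * Real.exp (-|x - μ| / b)
      = (∫ x in Iic μ, |x| * Real.exp (-|x - μ| / b))
        + ∫ x in Ioi μ, |x| * Real.exp (-|x - μ| / b) :=
    (intervalIntegral.integral_Iic_add_Ioi hIic_int hB2_int).symm
  have hsplit2 : ∫ x in Iic μ, |x| * Real.exp (-|x - μ| / b)
      = (∫ x in Iic (0:ℝ), |x| * Real.exp (-|x - μ| / b))
        + ∫ x in Ioc (0:ℝ) μ, |x| * Real.exp (-|x - μ| / b) := by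
    rw [← setIntegral_union (Iic_disjoint_Ioc le_rfl) measurableSet_Ioc hA_int hB1_int,
      Iic_union_Ioc_eq_Iic hμ]
  rw [hsplit, hsplit2, hAval, hB1val, hB2val]
  ring

lemma moment (hb : 0 < b) (μ : ℝ) :
    Integrable (fun x : ℝ => |x| * Real.exp (-|x - μ| / b)) ∧
    ∫ x : ℝ, |x| * Real.exp (-|x - μ| / b)
      = 2 * b * |μ| + 2 * b ^ 2 * Real.exp (-|μ| / b) := by
  rcases le_or_gt 0 μ with hμ | hμ
  · have h := moment_nonneg hb hμ
    rw [abs_of_nonneg hμ]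
    exact h
  · have h := moment_nonneg hb (neg_nonneg.mpr hμ.le)
    have key : ∀ x : ℝ, |(-x)| * Real.exp (-|(-x) - (-μ)| / b)
        = |x| * Real.exp (-|x - μ| / b) := by
      intro x
      rw [abs_neg, show (-x) - (-μ) = -(x - μ) by ring, abs_neg]
    constructor
    · have h2 := h.1.comp_neg
      refine h2.congr (Eventually.of_forall fun x => ?_)
      simpa using key x
    · calc ∫ x : ℝ, |x| * Real.exp (-|x - μ| / b)
          = ∫ x : ℝ, |(-x)| * Real.exp (-|(-x) - (-μ)| / b) := by
            congr 1; funext x; rw [key x]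
        _ = ∫ x : ℝ, |x| * Real.exp (-|x - (-μ)| / b) :=
            integral_neg_eq_self (fun x => |x| * Real.exp (-|x - (-μ)| / b)) volume
        _ = 2 * b * -μ + 2 * b ^ 2 * Real.exp (-(-μ) / b) := h.2
        _ = 2 * b * |μ| + 2 * b ^ 2 * Real.exp (-|μ| / b) := by rw [abs_of_neg hμ]

end LaplaceL1Aux

open LaplaceL1Aux

/-- Expected ℓ¹-norm under an `m`-dimensional Laplace distribution (folded Laplace mean):
`∫ ‖z‖₁ · q(z) dz = ‖z*‖₁ + b* · Σᵢ exp(−|z*ᵢ|/b*)` where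
`q(z) = (2b*)^{−m} · exp(−‖z − z*‖₁/b*)`. -/
theorem laplace_expected_l1_norm (m : ℕ) (hm : 0 < m) (bs : ℝ) (hbs : 0 < bs)
    (zs : Fin m → ℝ)
    (q : (Fin m → ℝ) → ℝ)
    (hq : ∀ z, q z = ((2 * bs) ^ m)⁻¹ * Real.exp (-(∑ i, |z i - zs i|) / bs)) :
    ∫ z : Fin m → ℝ, (∑ i, |z i|) * q z =
      (∑ i, |zs i|) + bs * ∑ i, Real.exp (-|zs i| / bs) := by
  have hb2 : (2 * bs) ≠ 0 := by positivity
  set g : Fin m → ℝ → ℝ := fun i x => (2 * bs)⁻¹ * Real.exp (-|x - zs i| / bs) with hgdef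
  have hq' : ∀ z : Fin m → ℝ, q z = ∏ j, g j (z j) := by
    intro z
    rw [hq]
    have e1 : Real.exp (-(∑ i, |z i - zs i|) / bs)
        = ∏ i, Real.exp (-|z i - zs i| / bs) := by
      rw [← Real.exp_sum]
      congr 1
      rw [← Finset.sum_div, ← Finset.sum_neg_distrib]
    have e2 : ((2 * bs) ^ m)⁻¹ = ∏ _i : Fin m, (2 * bs)⁻¹ := by
      rw [Finset.prod_const, Finset.card_univ, Fintype.card_fin, inv_pow]
    rw [e1, e2, ← Finset.prod_mul_distrib]
  have hg_int : ∀ i, Integrable (g i) := fun i =>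
    (integrable_exp_abs hbs (zs i)).const_mul _
  have hg_val : ∀ i, ∫ x : ℝ, g i x = 1 := by
    intro i
    rw [hgdef]
    simp only
    rw [integral_const_mul, integral_exp_abs hbs]
    field_simp
  have hag_int : ∀ i, Integrable (fun x : ℝ => |x| * g i x) := by
    intro i
    have h := ((moment hbs (zs i)).1).const_mul (2 * bs)⁻¹
    refine h.congr (Eventually.of_forall fun x => ?_)
    rw [hgdef]; ring
  have hag_val : ∀ i, ∫ x : ℝ, |x| * g i x
      = |zs i| + bs * Real.exp (-|zs i| / bs) := by
    intro i
    have h1 : (fun x : ℝ => |x| * g i x)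
        = fun x : ℝ => (2 * bs)⁻¹ * (|x| * Real.exp (-|x - zs i| / bs)) := by
      funext x; rw [hgdef]; ring
    rw [h1, integral_const_mul, (moment hbs (zs i)).2]
    field_simp
  -- product-form integrand for each i
  have hprod : ∀ (i : Fin m) (z : Fin m → ℝ),
      |z i| * ∏ j, g j (z j) = ∏ j, (if j = i then |z j| else 1) * g j (z j) := by
    intro i z
    conv_rhs => rw [Finset.prod_mul_distrib]
    rw [Finset.prod_ite_eq' Finset.univ i (fun j => |z j|), if_pos (Finset.mem_univ i)]
  have hFint : ∀ (i j : Fin m),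
      Integrable (fun x : ℝ => (if j = i then |x| else 1) * g j x) := by
    intro i j
    by_cases h : j = i
    · subst h; simpa using hag_int j
    · simpa [h] using hg_int j
  calc ∫ z : Fin m → ℝ, (∑ i, |z i|) * q z
      = ∫ z : Fin m → ℝ, ∑ i, |z i| * ∏ j, g j (z j) := by
        congr 1; funext z; rw [hq' z, Finset.sum_mul]
    _ = ∑ i, ∫ z : Fin m → ℝ, |z i| * ∏ j, g j (z j) := by
        refine integral_finset_sum _ (fun i _ => ?_)
        have h := MeasureTheory.Integrable.fintype_prod
          (f := fun j x => (if j = i then |x| else 1) * g j x) (hFint i)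
        refine h.congr (Eventually.of_forall fun z => ?_)
        exact (hprod i z).symm
    _ = ∑ i, (|zs i| + bs * Real.exp (-|zs i| / bs)) := by
        refine Finset.sum_congr rfl (fun i _ => ?_)
        calc ∫ z : Fin m → ℝ, |z i| * ∏ j, g j (z j)
            = ∫ z : Fin m → ℝ, ∏ j, (if j = i then |z j| else 1) * g j (z j) := by
              congr 1; funext z; rw [hprod i z]
          _ = ∏ j, ∫ x : ℝ, (if j = i then |x| else 1) * g j x :=
              MeasureTheory.integral_fintype_prod_eq_prod
                (fun j x => (if j = i then |x| else 1) * g j x)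
          _ = |zs i| + bs * Real.exp (-|zs i| / bs) := by
              have hval : ∀ j, (∫ x : ℝ, (if j = i then |x| else 1) * g j x)
                  = if j = i then |zs i| + bs * Real.exp (-|zs i| / bs) else 1 := by
                intro j
                by_cases h : j = i
                · subst h; simp only [if_pos rfl]; simpa using hag_val j
                · simp only [if_neg h]; simpa [h] using hg_val j
              rw [Finset.prod_congr rfl (fun j _ => hval j)]
              simp
    _ = (∑ i, |zs i|) + bs * ∑ i, Real.exp (-|zs i| / bs) := by
        rw [Finset.sum_add_distrib, Finset.mul_sum]
end

section
/- Let n, m be positive integers, σ, b, b* > 0, and let D ∈ ℝ^{n×m} be a matrix each of whose columns has Euclidean norm 1. Let f(x,z) = (1/(2σ²)) · ‖Dz − x‖₂² + (1/b) · ‖z‖₁, fix x ∈ ℝⁿ and z* ∈ ℝᵐ, and let q(z) = (2b*)^{−m} · exp(−‖z − z*‖₁/b*). Then ∫_{ℝᵐ} f(x,z) · q(z) dz = f(x,z*) + m·(b*)²/σ² + (b*/b) · Σ_{i=1}^{m} exp(−|z*_i|/b*). -/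
section SparseCodingAux
open MeasureTheory Real Set Filter Topology

variable {bs : ℝ}

variable {bs : ℝ}

-- basic integrability on Ioi 0
lemma myInt0 (hbs : 0 < bs) : IntegrableOn (fun t : ℝ => exp (-(bs⁻¹ * t))) (Ioi 0) := by
  simpa [neg_mul] using exp_neg_integrableOn_Ioi 0 (inv_pos.mpr hbs)

lemma myInt1 (hbs : 0 < bs) : IntegrableOn (fun t : ℝ => t * exp (-(bs⁻¹ * t))) (Ioi 0) := by
  have := integrableOn_rpow_mul_exp_neg_mul_rpow (s := 1) (p := 1) (b := bs⁻¹)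
    (by norm_num) one_pos (inv_pos.mpr hbs)
  simpa [Real.rpow_one, neg_mul] using this

lemma myInt2 (hbs : 0 < bs) : IntegrableOn (fun t : ℝ => t ^ 2 * exp (-(bs⁻¹ * t))) (Ioi 0) := by
  have := integrableOn_rpow_mul_exp_neg_mul_rpow (s := 2) (p := 1) (b := bs⁻¹)
    (by norm_num) one_pos (inv_pos.mpr hbs)
  have h2 : ∀ x : ℝ, x ^ (2 : ℝ) = x ^ 2 := fun x => by
    rw [show (2:ℝ) = ((2:ℕ):ℝ) by norm_num, Real.rpow_natCast]
  simpa [Real.rpow_one, h2, neg_mul] using this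

-- values on Ioi 0
lemma myVal0 (hbs : 0 < bs) : ∫ t in Ioi (0:ℝ), exp (-(bs⁻¹ * t)) = bs := by
  have := Real.integral_rpow_mul_exp_neg_mul_Ioi (a := 1) (r := bs⁻¹) one_pos (inv_pos.mpr hbs)
  simpa [Real.rpow_one, Real.Gamma_one] using this

lemma myVal1 (hbs : 0 < bs) : ∫ t in Ioi (0:ℝ), t * exp (-(bs⁻¹ * t)) = bs ^ 2 := by
  have := Real.integral_rpow_mul_exp_neg_mul_Ioi (a := 2) (r := bs⁻¹) two_pos (inv_pos.mpr hbs)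
  have h2 : ∀ x : ℝ, x ^ (2 : ℝ) = x ^ 2 := fun x => by
    rw [show (2:ℝ) = ((2:ℕ):ℝ) by norm_num, Real.rpow_natCast]
  simpa [Real.rpow_one, Real.Gamma_two, h2, show (2:ℝ)-1 = 1 by norm_num] using this

lemma myVal2 (hbs : 0 < bs) : ∫ t in Ioi (0:ℝ), t ^ 2 * exp (-(bs⁻¹ * t)) = 2 * bs ^ 3 := by
  have := Real.integral_rpow_mul_exp_neg_mul_Ioi (a := 3) (r := bs⁻¹) (by norm_num) (inv_pos.mpr hbs)
  have h2 : ∀ x : ℝ, x ^ ((2:ℕ) : ℝ) = x ^ 2 := fun x => Real.rpow_natCast x 2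
  have h3 : ∀ x : ℝ, x ^ ((3:ℕ) : ℝ) = x ^ 3 := fun x => Real.rpow_natCast x 3
  have hg : Real.Gamma 3 = 2 := by
    rw [show (3:ℝ) = ((2:ℕ):ℝ) + 1 by norm_num, Real.Gamma_nat_eq_factorial]; norm_num
  have : ∫ t in Ioi (0:ℝ), t ^ ((3:ℝ) - 1) * exp (-(bs⁻¹ * t)) = (1/bs⁻¹) ^ ((3:ℕ):ℝ) * Real.Gamma 3 := by
    simpa using this
  rw [show (3:ℝ)-1 = ((2:ℕ):ℝ) by norm_num] at this
  simp only [h2, h3] at this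
  rw [this, hg, one_div, inv_inv]; ring



-- tail integrals
lemma myTail0 (hbs : 0 < bs) {a : ℝ} (ha : 0 ≤ a) :
    ∫ t in Ioi a, exp (-(bs⁻¹ * t)) = bs * exp (-(bs⁻¹ * a)) := by
  have hderiv : ∀ t ∈ Ici a, HasDerivAt (fun t : ℝ => -bs * exp (-(bs⁻¹ * t)))
      (exp (-(bs⁻¹ * t))) t := by
    intro t _
    have h := (((hasDerivAt_id t).const_mul bs⁻¹).neg.exp).const_mul (-bs)
    refine h.congr_deriv ?_
    field_simp
    rfl
  have htend : Tendsto (fun t : ℝ => -bs * exp (-(bs⁻¹ * t))) atTop (𝓝 0) := by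
    have : Tendsto (fun t : ℝ => exp (-(bs⁻¹ * t))) atTop (𝓝 0) :=
      tendsto_exp_atBot.comp (tendsto_neg_atBot_iff.mpr (tendsto_id.const_mul_atTop (inv_pos.mpr hbs)))
    simpa using this.const_mul (-bs)
  have hint : IntegrableOn (fun t : ℝ => exp (-(bs⁻¹ * t))) (Ioi a) :=
    (myInt0 hbs).mono (Ioi_subset_Ioi ha) le_rfl
  have := integral_Ioi_of_hasDerivAt_of_tendsto' hderiv hint htend
  rw [this]; ring

lemma myTail1 (hbs : 0 < bs) {a : ℝ} (ha : 0 ≤ a) :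
    ∫ t in Ioi a, t * exp (-(bs⁻¹ * t)) = bs * (a + bs) * exp (-(bs⁻¹ * a)) := by
  have hderiv : ∀ t ∈ Ici a, HasDerivAt (fun t : ℝ => (-bs * t - bs ^ 2) * exp (-(bs⁻¹ * t)))
      (t * exp (-(bs⁻¹ * t))) t := by
    intro t _
    have h1 : HasDerivAt (fun t : ℝ => -bs * t - bs ^ 2) (-bs) t := by
      simpa using ((hasDerivAt_id t).const_mul (-bs)).sub_const (bs ^ 2)
    have h2 : HasDerivAt (fun t : ℝ => exp (-(bs⁻¹ * t))) (exp (-(bs⁻¹ * t)) * -(bs⁻¹ * 1)) t :=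
      ((hasDerivAt_id t).const_mul bs⁻¹).neg.exp
    have h := h1.mul h2
    refine h.congr_deriv ?_
    field_simp
    ring
  have htend : Tendsto (fun t : ℝ => (-bs * t - bs ^ 2) * exp (-(bs⁻¹ * t))) atTop (𝓝 0) := by
    have h1 : Tendsto (fun t : ℝ => t * exp (-(bs⁻¹ * t))) atTop (𝓝 0) := by
      have := tendsto_rpow_mul_exp_neg_mul_atTop_nhds_zero 1 bs⁻¹ (inv_pos.mpr hbs)
      simpa [Real.rpow_one, neg_mul] using this
    have h0 : Tendsto (fun t : ℝ => exp (-(bs⁻¹ * t))) atTop (𝓝 0) :=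
      tendsto_exp_atBot.comp (tendsto_neg_atBot_iff.mpr (tendsto_id.const_mul_atTop (inv_pos.mpr hbs)))
    have hsum := (h1.const_mul (-bs)).add (h0.const_mul (-bs ^ 2))
    have heq : (fun t : ℝ => (-bs * t - bs ^ 2) * exp (-(bs⁻¹ * t)))
        = fun t => -bs * (t * exp (-(bs⁻¹ * t))) + -bs ^ 2 * exp (-(bs⁻¹ * t)) := by
      funext t; ring
    rw [heq]; simpa using hsum
  have hint : IntegrableOn (fun t : ℝ => t * exp (-(bs⁻¹ * t))) (Ioi a) :=
    (myInt1 hbs).mono (Ioi_subset_Ioi ha) le_rfl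
  have := integral_Ioi_of_hasDerivAt_of_tendsto' hderiv hint htend
  rw [this]; ring



lemma comp_abs_integrable {f : ℝ → ℝ} (hf : IntegrableOn (fun x => f |x|) (Ioi 0)) :
    Integrable fun x : ℝ => f |x| := by
  have int_Iic : IntegrableOn (fun x : ℝ ↦ f |x|) (Iic 0) := by
    rw [← Measure.map_neg_eq_self (volume : Measure ℝ)]
    have m : MeasurableEmbedding fun x : ℝ => -x := (Homeomorph.neg ℝ).measurableEmbedding
    rw [m.integrableOn_map_iff]
    simp_rw [Function.comp_def, abs_neg, neg_preimage, neg_Iic, neg_zero]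
    exact Iff.mpr integrableOn_Ici_iff_integrableOn_Ioi hf
  have : IntegrableOn (fun x : ℝ => f |x|) (Iic 0 ∪ Ioi 0) := int_Iic.union hf
  rwa [Iic_union_Ioi, integrableOn_univ] at this

lemma hdiv (hbs : 0 < bs) : ∀ a : ℝ, -a / bs = -(bs⁻¹ * a) := by
  intro a; rw [neg_div, div_eq_inv_mul]


lemma lapInt0 (hbs : 0 < bs) : Integrable (fun t : ℝ => exp (-|t| / bs)) :=
  comp_abs_integrable (f := fun u => exp (-u / bs)) (by
    exact (myInt0 hbs).congr_fun (fun t ht => by show rexp (-(bs⁻¹ * t)) = rexp (-|t| / bs); rw [hdiv hbs, abs_of_pos ht]) measurableSet_Ioi)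

lemma lapInt1 (hbs : 0 < bs) : Integrable (fun t : ℝ => |t| * exp (-|t| / bs)) :=
  comp_abs_integrable (f := fun u => u * exp (-u / bs)) (by
    exact (myInt1 hbs).congr_fun (fun t ht => by show t * rexp (-(bs⁻¹ * t)) = |t| * rexp (-|t| / bs); rw [hdiv hbs, abs_of_pos ht]) measurableSet_Ioi)

lemma lapInt2 (hbs : 0 < bs) : Integrable (fun t : ℝ => t ^ 2 * exp (-|t| / bs)) := by
  have := comp_abs_integrable (f := fun u => u ^ 2 * exp (-u / bs)) (by
    exact (myInt2 hbs).congr_fun (fun t ht => by show t ^ 2 * rexp (-(bs⁻¹ * t)) = |t| ^ 2 * rexp (-|t| / bs); rw [hdiv hbs, abs_of_pos ht]) measurableSet_Ioi)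
  simpa [sq_abs] using this

lemma lapVal0 (hbs : 0 < bs) : ∫ t : ℝ, exp (-|t| / bs) = 2 * bs := by
  rw [integral_comp_abs (f := fun u => exp (-u / bs))]
  rw [show (∫ t in Ioi (0:ℝ), exp (-t / bs)) = ∫ t in Ioi (0:ℝ), exp (-(bs⁻¹ * t)) from
    setIntegral_congr_fun measurableSet_Ioi (fun t _ => by rw [hdiv hbs]), myVal0 hbs]

lemma lapVal2 (hbs : 0 < bs) : ∫ t : ℝ, t ^ 2 * exp (-|t| / bs) = 4 * bs ^ 3 := by
  have h : ∀ t : ℝ, t ^ 2 * exp (-|t| / bs) = |t| ^ 2 * exp (-|t| / bs) := fun t => by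
    rw [sq_abs]
  simp_rw [h]
  rw [integral_comp_abs (f := fun u => u ^ 2 * exp (-u / bs))]
  rw [show (∫ t in Ioi (0:ℝ), t ^ 2 * exp (-t / bs)) = ∫ t in Ioi (0:ℝ), t ^ 2 * exp (-(bs⁻¹ * t)) from
    setIntegral_congr_fun measurableSet_Ioi (fun t _ => by rw [hdiv hbs]), myVal2 hbs]
  ring

lemma lapIntLin (hbs : 0 < bs) : Integrable (fun t : ℝ => t * exp (-|t| / bs)) := by
  refine (lapInt1 hbs).mono' ?_ ?_
  · exact (continuous_id.mul (((continuous_abs.neg).div_const bs).rexp)).aestronglyMeasurable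
  · refine Filter.Eventually.of_forall (fun t => ?_)
    rw [Real.norm_eq_abs, abs_mul, abs_of_pos (exp_pos _)]

lemma lapVal1 (hbs : 0 < bs) : ∫ t : ℝ, t * exp (-|t| / bs) = 0 := by
  have h := integral_neg_eq_self (fun t : ℝ => t * exp (-|t| / bs)) (volume : Measure ℝ)
  simp only [abs_neg, neg_mul] at h
  have : ∫ t : ℝ, t * exp (-|t| / bs) = -∫ t : ℝ, t * exp (-|t| / bs) := by
    rw [← integral_neg]; exact h.symm
  linarith




lemma lapIntAbs (hbs : 0 < bs) (c : ℝ) : Integrable (fun t : ℝ => |t + c| * exp (-|t| / bs)) := by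
  refine Integrable.mono' ((lapInt1 hbs).add ((lapInt0 hbs).const_mul |c|)) ?_ ?_
  · exact ((continuous_id.add continuous_const).abs.mul
      (((continuous_abs.neg).div_const bs).rexp)).aestronglyMeasurable
  · refine Filter.Eventually.of_forall (fun t => ?_)
    rw [Real.norm_eq_abs, abs_mul, abs_of_pos (exp_pos _), abs_abs]
    show |t + c| * exp (-|t| / bs) ≤ |t| * exp (-|t| / bs) + |c| * exp (-|t| / bs)
    have h1 : |t + c| ≤ |t| + |c| := abs_add_le t c
    have h2 : (0:ℝ) < exp (-|t| / bs) := exp_pos _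
    nlinarith

lemma lapValAbs_nonneg (hbs : 0 < bs) {c : ℝ} (hc : 0 ≤ c) :
    ∫ t : ℝ, |t + c| * exp (-|t| / bs) = 2 * bs * c + 2 * bs ^ 2 * exp (-(bs⁻¹ * c)) := by
  have hint := lapIntAbs hbs c
  -- split ℝ
  rw [← intervalIntegral.integral_Iic_add_Ioi (hint.integrableOn) (hint.integrableOn)]
  -- Ioi part
  have hIoi : ∫ t in Ioi (0:ℝ), |t + c| * exp (-|t| / bs)
      = bs ^ 2 + c * bs := by
    rw [show (∫ t in Ioi (0:ℝ), |t + c| * exp (-|t| / bs))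
        = ∫ t in Ioi (0:ℝ), (t * exp (-(bs⁻¹ * t)) + c * exp (-(bs⁻¹ * t))) from
      setIntegral_congr_fun measurableSet_Ioi (fun t ht => by
        have ht' : (0:ℝ) < t := ht
        rw [hdiv hbs, abs_of_pos ht', abs_of_pos (by linarith : (0:ℝ) < t + c)]; ring)]
    rw [integral_add (myInt1 hbs) ((myInt0 hbs).const_mul c), integral_const_mul,
      myVal0 hbs, myVal1 hbs]
  -- Iic part
  have hneg : ∫ t in Iic (0:ℝ), |t + c| * exp (-|t| / bs)
      = ∫ t in Ioi (0:ℝ), |c - t| * exp (-(bs⁻¹ * t)) := by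
    have := integral_comp_neg_Iic (0:ℝ) (fun x => |(-x) + c| * exp (-|(-x)| / bs))
    simp only [neg_neg, neg_zero] at this
    rw [this]
    refine setIntegral_congr_fun measurableSet_Ioi (fun t ht => ?_)
    have ht' : (0:ℝ) < t := ht
    rw [abs_neg, abs_of_pos ht', hdiv hbs]
    ring_nf
  rw [hneg]
  -- split Ioi 0 at c
  have hsub1 : Ioc (0:ℝ) c ⊆ Ioi 0 := Ioc_subset_Ioi_self
  have hsub2 : Ioi c ⊆ Ioi (0:ℝ) := Ioi_subset_Ioi hc
  have hdisj : Disjoint (Ioc (0:ℝ) c) (Ioi c) := Ioc_disjoint_Ioi le_rfl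
  have hunion : Ioc (0:ℝ) c ∪ Ioi c = Ioi 0 := Ioc_union_Ioi_eq_Ioi hc
  have habs : IntegrableOn (fun t : ℝ => |c - t| * exp (-(bs⁻¹ * t))) (Ioi 0) := by
    refine Integrable.mono' (((myInt0 hbs).const_mul c).add (myInt1 hbs)) ?_ ?_
    · exact (((continuous_const.sub continuous_id).abs.mul
        (((continuous_const.mul continuous_id).neg).rexp))).aestronglyMeasurable.restrict
    · filter_upwards [self_mem_ae_restrict measurableSet_Ioi] with t ht
      have ht' : (0:ℝ) < t := ht
      rw [Real.norm_eq_abs, abs_mul, abs_of_pos (exp_pos _), abs_abs]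
      show |c - t| * exp (-(bs⁻¹ * t)) ≤ c * exp (-(bs⁻¹ * t)) + t * exp (-(bs⁻¹ * t))
      have h1 : |c - t| ≤ |c| + |t| := abs_sub c t
      rw [abs_of_nonneg hc, abs_of_pos ht'] at h1
      have h2 : (0:ℝ) < exp (-(bs⁻¹ * t)) := exp_pos _
      nlinarith
  have split : ∀ g : ℝ → ℝ, IntegrableOn g (Ioi (0:ℝ)) →
      ∫ t in Ioi (0:ℝ), g t = (∫ t in Ioc (0:ℝ) c, g t) + ∫ t in Ioi c, g t := by
    intro g hg
    rw [← hunion, setIntegral_union hdisj measurableSet_Ioi (hg.mono_set hsub1)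
      (hg.mono_set hsub2)]
  have e0c := myTail0 hbs hc
  have e1c := myTail1 hbs hc
  have hIoc0 : ∫ t in Ioc (0:ℝ) c, exp (-(bs⁻¹ * t)) = bs - bs * exp (-(bs⁻¹ * c)) := by
    have h := split _ (myInt0 hbs)
    rw [myVal0 hbs, e0c] at h; linarith
  have hIoc1 : ∫ t in Ioc (0:ℝ) c, t * exp (-(bs⁻¹ * t))
      = bs ^ 2 - bs * (c + bs) * exp (-(bs⁻¹ * c)) := by
    have h := split _ (myInt1 hbs)
    rw [myVal1 hbs, e1c] at h; linarith
  have hmid : ∫ t in Ioc (0:ℝ) c, |c - t| * exp (-(bs⁻¹ * t))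
      = c * (bs - bs * exp (-(bs⁻¹ * c))) - (bs ^ 2 - bs * (c + bs) * exp (-(bs⁻¹ * c))) := by
    rw [show (∫ t in Ioc (0:ℝ) c, |c - t| * exp (-(bs⁻¹ * t)))
        = ∫ t in Ioc (0:ℝ) c, (c * exp (-(bs⁻¹ * t)) - t * exp (-(bs⁻¹ * t))) from
      setIntegral_congr_fun measurableSet_Ioc (fun t ht => by
        rw [abs_of_nonneg (by linarith [ht.2] : (0:ℝ) ≤ c - t)]; ring)]
    rw [integral_sub (((myInt0 hbs).mono_set hsub1).const_mul c) ((myInt1 hbs).mono_set hsub1),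
      integral_const_mul, hIoc0, hIoc1]
  have htail : ∫ t in Ioi c, |c - t| * exp (-(bs⁻¹ * t))
      = bs * (c + bs) * exp (-(bs⁻¹ * c)) - c * (bs * exp (-(bs⁻¹ * c))) := by
    rw [show (∫ t in Ioi c, |c - t| * exp (-(bs⁻¹ * t)))
        = ∫ t in Ioi c, (t * exp (-(bs⁻¹ * t)) - c * exp (-(bs⁻¹ * t))) from
      setIntegral_congr_fun measurableSet_Ioi (fun t ht => by
        rw [abs_of_nonpos (by linarith [ht.out] : c - t ≤ (0:ℝ))]; ring)]
    rw [integral_sub ((myInt1 hbs).mono_set hsub2) (((myInt0 hbs).mono_set hsub2).const_mul c),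
      integral_const_mul, e0c, e1c]
  rw [split _ habs, hmid, htail, hIoi]
  ring

lemma lapValAbs (hbs : 0 < bs) (c : ℝ) :
    ∫ t : ℝ, |t + c| * exp (-|t| / bs) = 2 * bs * |c| + 2 * bs ^ 2 * exp (-|c| / bs) := by
  rcases le_or_gt 0 c with hc | hc
  · rw [lapValAbs_nonneg hbs hc, abs_of_nonneg hc, hdiv hbs]
  · have h := integral_neg_eq_self (fun t : ℝ => |t + c| * exp (-|t| / bs)) (volume : Measure ℝ)
    have heq : (fun t : ℝ => |(-t) + c| * exp (-|(-t)| / bs))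
        = fun t : ℝ => |t + (-c)| * exp (-|t| / bs) := by
      funext t; rw [abs_neg]; congr 1
      rw [show -t + c = -(t + -c) by ring, abs_neg]
    rw [← h, heq, lapValAbs_nonneg hbs (by linarith : (0:ℝ) ≤ -c),
      abs_of_neg hc, hdiv hbs]

noncomputable def lap (bs : ℝ) (t : ℝ) : ℝ := (2*bs)⁻¹ * Real.exp (-|t| / bs)




lemma lap_int (hbs : 0 < bs) : Integrable (lap bs) := (lapInt0 hbs).const_mul _

lemma lap_val (hbs : 0 < bs) : ∫ t : ℝ, lap bs t = 1 := by
  unfold lap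
  rw [integral_const_mul, lapVal0 hbs]
  field_simp

lemma lapM1_int (hbs : 0 < bs) : Integrable (fun t : ℝ => t * lap bs t) := by
  have heq : (fun t : ℝ => t * lap bs t) = fun t => (2*bs)⁻¹ * (t * exp (-|t| / bs)) := by
    funext t; unfold lap; ring
  rw [heq]; exact (lapIntLin hbs).const_mul _

lemma lapM1_val (hbs : 0 < bs) : ∫ t : ℝ, t * lap bs t = 0 := by
  have heq : (fun t : ℝ => t * lap bs t) = fun t => (2*bs)⁻¹ * (t * exp (-|t| / bs)) := by
    funext t; unfold lap; ring
  rw [heq, integral_const_mul, lapVal1 hbs, mul_zero]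

lemma lapM2_int (hbs : 0 < bs) : Integrable (fun t : ℝ => t ^ 2 * lap bs t) := by
  have heq : (fun t : ℝ => t ^ 2 * lap bs t) = fun t => (2*bs)⁻¹ * (t ^ 2 * exp (-|t| / bs)) := by
    funext t; unfold lap; ring
  rw [heq]; exact (lapInt2 hbs).const_mul _

lemma lapM2_val (hbs : 0 < bs) : ∫ t : ℝ, t ^ 2 * lap bs t = 2 * bs ^ 2 := by
  have heq : (fun t : ℝ => t ^ 2 * lap bs t) = fun t => (2*bs)⁻¹ * (t ^ 2 * exp (-|t| / bs)) := by
    funext t; unfold lap; ring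
  rw [heq, integral_const_mul, lapVal2 hbs]
  field_simp; ring

lemma lapAbs_int (hbs : 0 < bs) (c : ℝ) : Integrable (fun t : ℝ => |t + c| * lap bs t) := by
  have heq : (fun t : ℝ => |t + c| * lap bs t)
      = fun t => (2*bs)⁻¹ * (|t + c| * exp (-|t| / bs)) := by
    funext t; unfold lap; ring
  rw [heq]; exact (lapIntAbs hbs c).const_mul _

lemma lapAbs_val (hbs : 0 < bs) (c : ℝ) :
    ∫ t : ℝ, |t + c| * lap bs t = |c| + bs * exp (-|c| / bs) := by
  have heq : (fun t : ℝ => |t + c| * lap bs t)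
      = fun t => (2*bs)⁻¹ * (|t + c| * exp (-|t| / bs)) := by
    funext t; unfold lap; ring
  rw [heq, integral_const_mul, lapValAbs hbs c]
  field_simp





-- one-coordinate product lemma
lemma one_coord {bs : ℝ} (hbs : 0 < bs) {m : ℕ} (u : ℝ → ℝ)
    (hu : Integrable (fun t => u t * lap bs t)) (i : Fin m) :
    Integrable (fun w : Fin m → ℝ => u (w i) * ∏ r, lap bs (w r)) ∧
      ∫ w : Fin m → ℝ, u (w i) * ∏ r, lap bs (w r) = ∫ t : ℝ, u t * lap bs t := by
  classical
  set H : Fin m → ℝ → ℝ := Function.update (fun _ : Fin m => lap bs) i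
    (fun t => u t * lap bs t) with hH
  have hHr : ∀ r ≠ i, H r = lap bs := fun r hr => Function.update_of_ne hr _ _
  have hHi : H i = fun t => u t * lap bs t := Function.update_self _ _ _
  have hpt : (fun w : Fin m → ℝ => u (w i) * ∏ r, lap bs (w r))
      = fun w => ∏ r, H r (w r) := by
    funext w
    rw [← Finset.mul_prod_erase Finset.univ (fun r => H r (w r)) (Finset.mem_univ i),
      ← Finset.mul_prod_erase Finset.univ (fun r => lap bs (w r)) (Finset.mem_univ i),
      hHi]
    have hcong : ∏ r ∈ Finset.univ.erase i, H r (w r)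
        = ∏ r ∈ Finset.univ.erase i, lap bs (w r) :=
      Finset.prod_congr rfl (fun r hr => by rw [hHr r (Finset.ne_of_mem_erase hr)])
    rw [hcong]; ring
  have hint : ∀ r, Integrable (H r) := by
    intro r
    rcases eq_or_ne r i with rfl | hr
    · rw [hHi]; exact hu
    · rw [hHr r hr]; exact lap_int hbs
  constructor
  · rw [hpt]; exact Integrable.fintype_prod hint
  · rw [hpt, integral_fintype_prod_volume_eq_prod H,
      ← Finset.mul_prod_erase Finset.univ (fun r => ∫ t, H r t) (Finset.mem_univ i), hHi]
    have hcong : ∏ r ∈ Finset.univ.erase i, (∫ t, H r t)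
        = ∏ r ∈ Finset.univ.erase i, (1:ℝ) :=
      Finset.prod_congr rfl (fun r hr => by
        rw [hHr r (Finset.ne_of_mem_erase hr), lap_val hbs])
    rw [hcong]; simp

lemma two_coord {bs : ℝ} (hbs : 0 < bs) {m : ℕ} (u v : ℝ → ℝ)
    (hu : Integrable (fun t => u t * lap bs t)) (hv : Integrable (fun t => v t * lap bs t))
    {i k : Fin m} (hik : i ≠ k) :
    Integrable (fun w : Fin m → ℝ => u (w i) * v (w k) * ∏ r, lap bs (w r)) ∧
      ∫ w : Fin m → ℝ, u (w i) * v (w k) * ∏ r, lap bs (w r)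
        = (∫ t : ℝ, u t * lap bs t) * ∫ t : ℝ, v t * lap bs t := by
  classical
  set H : Fin m → ℝ → ℝ := Function.update
    (Function.update (fun _ : Fin m => lap bs) i (fun t => u t * lap bs t)) k
    (fun t => v t * lap bs t) with hH
  have hHk : H k = fun t => v t * lap bs t := Function.update_self _ _ _
  have hHi : H i = fun t => u t * lap bs t := by
    rw [hH, Function.update_of_ne hik, Function.update_self]
  have hHr : ∀ r, r ≠ i → r ≠ k → H r = lap bs := fun r hri hrk => by
    rw [hH, Function.update_of_ne hrk, Function.update_of_ne hri]
  have hmem : i ∈ Finset.univ.erase k := Finset.mem_erase.mpr ⟨hik, Finset.mem_univ i⟩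
  have hsplit : ∀ G : Fin m → ℝ, ∏ r, G r = G k * (G i * ∏ r ∈ (Finset.univ.erase k).erase i, G r) := by
    intro G
    rw [← Finset.mul_prod_erase Finset.univ G (Finset.mem_univ k),
      ← Finset.mul_prod_erase (Finset.univ.erase k) G hmem]
  have hpt : (fun w : Fin m → ℝ => u (w i) * v (w k) * ∏ r, lap bs (w r))
      = fun w => ∏ r, H r (w r) := by
    funext w
    rw [hsplit (fun r => H r (w r)), hsplit (fun r => lap bs (w r)), hHk, hHi]
    have hcong : ∏ r ∈ (Finset.univ.erase k).erase i, H r (w r)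
        = ∏ r ∈ (Finset.univ.erase k).erase i, lap bs (w r) :=
      Finset.prod_congr rfl (fun r hr => by
        rw [hHr r (Finset.ne_of_mem_erase hr)
          (Finset.ne_of_mem_erase (Finset.mem_of_mem_erase hr))])
    rw [hcong]; ring
  have hint : ∀ r, Integrable (H r) := by
    intro r
    rcases eq_or_ne r k with rfl | hrk
    · rw [hHk]; exact hv
    rcases eq_or_ne r i with rfl | hri
    · rw [hHi]; exact hu
    · rw [hHr r hri hrk]; exact lap_int hbs
  constructor
  · rw [hpt]; exact Integrable.fintype_prod hint
  · rw [hpt, integral_fintype_prod_volume_eq_prod H, hsplit (fun r => ∫ t, H r t), hHk, hHi]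
    have hcong : ∏ r ∈ (Finset.univ.erase k).erase i, (∫ t, H r t)
        = ∏ r ∈ (Finset.univ.erase k).erase i, (1:ℝ) :=
      Finset.prod_congr rfl (fun r hr => by
        rw [hHr r (Finset.ne_of_mem_erase hr)
          (Finset.ne_of_mem_erase (Finset.mem_of_mem_erase hr)), lap_val hbs])
    rw [hcong]; simp [mul_comm]

end SparseCodingAux

open MeasureTheory Real Finset

/-- Expected sparse-coding objective under the Laplace approximate posterior
(exact identity): for `D` with unit-norm columns,
`∫ f(x,z)·q(z) dz = f(x,z*) + m·(b*)²/σ² + (b*/b)·Σᵢ exp(−|z*ᵢ|/b*)`. -/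
theorem expected_sparse_coding_objective (n m : ℕ) (hn : 0 < n) (hm : 0 < m)
    (σ b bs : ℝ) (hσ : 0 < σ) (hb : 0 < b) (hbs : 0 < bs)
    (D : Matrix (Fin n) (Fin m) ℝ)
    (hD : ∀ i, ∑ j, (D j i) ^ 2 = 1)
    (f : (Fin n → ℝ) → (Fin m → ℝ) → ℝ)
    (hf : ∀ x z, f x z =
      1 / (2 * σ ^ 2) * (∑ j, ((∑ i, D j i * z i) - x j) ^ 2) + (1 / b) * (∑ i, |z i|))
    (x : Fin n → ℝ) (zs : Fin m → ℝ)
    (q : (Fin m → ℝ) → ℝ)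
    (hq : ∀ z, q z = ((2 * bs) ^ m)⁻¹ * Real.exp (-(∑ i, |z i - zs i|) / bs)) :
    ∫ z : Fin m → ℝ, f x z * q z =
      f x zs + (m : ℝ) * bs ^ 2 / σ ^ 2 + (bs / b) * ∑ i, Real.exp (-|zs i| / bs) := by
  classical
  -- q as a product of 1D Laplace densities
  have hq' : ∀ z : Fin m → ℝ, q z = ∏ r, lap bs (z r - zs r) := by
    intro z
    rw [hq]
    unfold lap
    rw [Finset.prod_mul_distrib, Finset.prod_const, ← Real.exp_sum]
    simp only [Finset.card_univ, Fintype.card_fin, inv_pow]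
    congr 1
    rw [neg_div, Finset.sum_div, ← Finset.sum_neg_distrib]
    simp [neg_div]
  -- change of variables
  have key : ∫ z : Fin m → ℝ, f x z * q z
      = ∫ w : Fin m → ℝ,
        (1 / (2 * σ ^ 2) * (∑ j, ((∑ i, D j i * w i) + ((∑ i, D j i * zs i) - x j)) ^ 2)
          + (1 / b) * (∑ i, |w i + zs i|)) * ∏ r, lap bs (w r) := by
    rw [← integral_add_right_eq_self (μ := volume) (fun z => f x z * q z) zs]
    congr 1
    funext w
    rw [hf, hq']
    simp only [Pi.add_apply]
    have h1 : ∀ j : Fin n, (∑ i, D j i * (w i + zs i)) - x j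
        = (∑ i, D j i * w i) + ((∑ i, D j i * zs i) - x j) := by
      intro j
      rw [show (∑ i, D j i * (w i + zs i)) = (∑ i, D j i * w i) + ∑ i, D j i * zs i by
        rw [← Finset.sum_add_distrib]; exact Finset.sum_congr rfl (fun i _ => by ring)]
      ring
    have h2 : ∀ r : Fin m, w r + zs r - zs r = w r := fun r => by ring
    simp only [h1, h2]
  -- elementary moments on the product space
  have hP : Integrable (fun w : Fin m → ℝ => ∏ r, lap bs (w r)) ∧
      ∫ w : Fin m → ℝ, ∏ r, lap bs (w r) = 1 := by
    refine ⟨Integrable.fintype_prod (fun _ => lap_int hbs), ?_⟩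
    rw [integral_fintype_prod_volume_eq_prod (fun _ : Fin m => lap bs)]
    simp [lap_val hbs]
  have hW : ∀ i : Fin m, Integrable (fun w : Fin m → ℝ => w i * ∏ r, lap bs (w r)) ∧
      ∫ w : Fin m → ℝ, w i * ∏ r, lap bs (w r) = 0 := by
    intro i
    have h := one_coord hbs (fun t => t) (lapM1_int hbs) i
    exact ⟨h.1, by rw [h.2, lapM1_val hbs]⟩
  have hWW : ∀ i k : Fin m, Integrable (fun w : Fin m → ℝ => w i * w k * ∏ r, lap bs (w r)) ∧
      ∫ w : Fin m → ℝ, w i * w k * ∏ r, lap bs (w r)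
        = if i = k then 2 * bs ^ 2 else 0 := by
    intro i k
    rcases eq_or_ne i k with rfl | hik
    · have h := one_coord hbs (fun t => t ^ 2) (lapM2_int hbs) i
      have heq : (fun w : Fin m → ℝ => w i * w i * ∏ r, lap bs (w r))
          = fun w => (w i) ^ 2 * ∏ r, lap bs (w r) := by funext w; ring_nf
      rw [heq]
      exact ⟨h.1, by rw [h.2, lapM2_val hbs]; simp⟩
    · have h := two_coord hbs (fun t => t) (fun t => t) (lapM1_int hbs) (lapM1_int hbs) hik
      exact ⟨h.1, by rw [h.2, lapM1_val hbs, if_neg hik, mul_zero]⟩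
  have hAbs : ∀ i : Fin m,
      Integrable (fun w : Fin m → ℝ => |w i + zs i| * ∏ r, lap bs (w r)) ∧
      ∫ w : Fin m → ℝ, |w i + zs i| * ∏ r, lap bs (w r)
        = |zs i| + bs * exp (-|zs i| / bs) := by
    intro i
    have h := one_coord hbs (fun t => |t + zs i|) (lapAbs_int hbs (zs i)) i
    exact ⟨h.1, by rw [h.2, lapAbs_val hbs (zs i)]⟩
  -- the quadratic form
  have hQ : ∀ j : Fin n,
      Integrable (fun w : Fin m → ℝ =>
        ((∑ i, D j i * w i) + ((∑ i, D j i * zs i) - x j)) ^ 2 * ∏ r, lap bs (w r)) ∧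
      ∫ w : Fin m → ℝ,
        ((∑ i, D j i * w i) + ((∑ i, D j i * zs i) - x j)) ^ 2 * ∏ r, lap bs (w r)
        = 2 * bs ^ 2 * (∑ i, D j i ^ 2) + ((∑ i, D j i * zs i) - x j) ^ 2 := by
    intro j
    set cj : ℝ := (∑ i, D j i * zs i) - x j with hcj
    have hexp : (fun w : Fin m → ℝ =>
        ((∑ i, D j i * w i) + cj) ^ 2 * ∏ r, lap bs (w r))
        = fun w => (∑ i, ∑ k, (D j i * D j k) * (w i * w k * ∏ r, lap bs (w r)))
          + ((∑ i, (2 * cj * D j i) * (w i * ∏ r, lap bs (w r)))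
            + cj ^ 2 * ∏ r, lap bs (w r)) := by
      funext w
      have e1 : (∑ i, D j i * w i) * (∑ k, D j k * w k)
          = ∑ i, ∑ k, (D j i * D j k) * (w i * w k) := by
        rw [Finset.sum_mul_sum]
        exact Finset.sum_congr rfl fun i _ => Finset.sum_congr rfl fun k _ => by ring
      have e2 : ((∑ i, D j i * w i) + cj) ^ 2
          = (∑ i, ∑ k, (D j i * D j k) * (w i * w k))
            + ((∑ i, 2 * cj * (D j i * w i)) + cj ^ 2) := by
        rw [← e1, ← Finset.mul_sum]; ring
      rw [e2, add_mul, add_mul, Finset.sum_mul, Finset.sum_mul]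
      congr 1
      · exact Finset.sum_congr rfl fun i _ => by
          rw [Finset.sum_mul]; exact Finset.sum_congr rfl fun k _ => by ring
      · congr 1
        exact Finset.sum_congr rfl fun i _ => by ring
    constructor
    · rw [hexp]
      exact (integrable_finset_sum _ (fun i _ => integrable_finset_sum _
          (fun k _ => ((hWW i k).1.const_mul _)))).add
        ((integrable_finset_sum _ (fun i _ => ((hW i).1.const_mul _))).add
          (hP.1.const_mul _))
    · rw [hexp]
      have hI1 : Integrable (fun w : Fin m → ℝ =>
          ∑ i, ∑ k, (D j i * D j k) * (w i * w k * ∏ r, lap bs (w r))) :=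
        integrable_finset_sum _ (fun i _ => integrable_finset_sum _
          (fun k _ => ((hWW i k).1.const_mul _)))
      have hI2 : Integrable (fun w : Fin m → ℝ =>
          ∑ i, (2 * cj * D j i) * (w i * ∏ r, lap bs (w r))) :=
        integrable_finset_sum _ (fun i _ => ((hW i).1.const_mul _))
      have hI3 : Integrable (fun w : Fin m → ℝ => cj ^ 2 * ∏ r, lap bs (w r)) :=
        hP.1.const_mul _
      have hI23 : Integrable (fun w : Fin m → ℝ =>
          (∑ i, (2 * cj * D j i) * (w i * ∏ r, lap bs (w r)))
            + cj ^ 2 * ∏ r, lap bs (w r)) := hI2.add hI3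
      rw [integral_add hI1 hI23, integral_add hI2 hI3]
      have t1 : ∫ w : Fin m → ℝ, ∑ i, ∑ k, (D j i * D j k) * (w i * w k * ∏ r, lap bs (w r))
          = 2 * bs ^ 2 * ∑ i, D j i ^ 2 := by
        rw [integral_finset_sum _ (fun i _ => integrable_finset_sum _
          (fun k _ => ((hWW i k).1.const_mul _)))]
        have hin : ∀ i : Fin m,
            ∫ w : Fin m → ℝ, ∑ k, (D j i * D j k) * (w i * w k * ∏ r, lap bs (w r))
            = D j i ^ 2 * (2 * bs ^ 2) := by
          intro i
          rw [integral_finset_sum _ (fun k _ => ((hWW i k).1.const_mul _))]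
          have hterm : ∀ k : Fin m,
              ∫ w : Fin m → ℝ, (D j i * D j k) * (w i * w k * ∏ r, lap bs (w r))
              = (D j i * D j k) * (if i = k then 2 * bs ^ 2 else 0) := fun k => by
            rw [integral_const_mul, (hWW i k).2]
          rw [Finset.sum_congr rfl (fun k _ => hterm k)]
          simp [mul_ite, mul_zero, Finset.sum_ite_eq, pow_two]
        rw [Finset.sum_congr rfl (fun i _ => hin i), ← Finset.sum_mul]
        ring
      have t2 : ∫ w : Fin m → ℝ, ∑ i, (2 * cj * D j i) * (w i * ∏ r, lap bs (w r)) = 0 := by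
        rw [integral_finset_sum _ (fun i _ => ((hW i).1.const_mul _))]
        have : ∀ i : Fin m, ∫ w : Fin m → ℝ, (2 * cj * D j i) * (w i * ∏ r, lap bs (w r))
            = 0 := fun i => by rw [integral_const_mul, (hW i).2, mul_zero]
        rw [Finset.sum_congr rfl (fun i _ => this i), Finset.sum_const_zero]
      have t3 : ∫ w : Fin m → ℝ, cj ^ 2 * ∏ r, lap bs (w r) = cj ^ 2 := by
        rw [integral_const_mul, hP.2, mul_one]
      rw [t1, t2, t3]; ring
  -- assemble
  have hsplit2 : (fun w : Fin m → ℝ =>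
      (1 / (2 * σ ^ 2) * (∑ j, ((∑ i, D j i * w i) + ((∑ i, D j i * zs i) - x j)) ^ 2)
        + (1 / b) * (∑ i, |w i + zs i|)) * ∏ r, lap bs (w r))
      = fun w => 1 / (2 * σ ^ 2) * (∑ j, ((∑ i, D j i * w i) + ((∑ i, D j i * zs i) - x j)) ^ 2
          * ∏ r, lap bs (w r))
        + (1 / b) * (∑ i, |w i + zs i| * ∏ r, lap bs (w r)) := by
    funext w
    simp only [add_mul, mul_assoc, Finset.sum_mul]
  rw [key, hsplit2]
  rw [integral_add ((integrable_finset_sum _ (fun j _ => (hQ j).1)).const_mul _)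
      ((integrable_finset_sum _ (fun i _ => (hAbs i).1)).const_mul _),
    integral_const_mul, integral_const_mul,
    integral_finset_sum _ (fun j _ => (hQ j).1),
    integral_finset_sum _ (fun i _ => (hAbs i).1),
    Finset.sum_congr rfl (fun j _ => (hQ j).2),
    Finset.sum_congr rfl (fun i _ => (hAbs i).2)]
  have hsum1 : ∑ j, (2 * bs ^ 2 * (∑ i, D j i ^ 2) + ((∑ i, D j i * zs i) - x j) ^ 2)
      = 2 * bs ^ 2 * (m : ℝ) + ∑ j, ((∑ i, D j i * zs i) - x j) ^ 2 := by
    rw [Finset.sum_add_distrib, ← Finset.mul_sum, Finset.sum_comm]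
    simp [hD]
  have hsum2 : ∑ i, (|zs i| + bs * exp (-|zs i| / bs))
      = (∑ i, |zs i|) + bs * ∑ i, exp (-|zs i| / bs) := by
    rw [Finset.sum_add_distrib, Finset.mul_sum]
  rw [hsum1, hsum2, hf x zs]
  field_simp
  ring
end

section
/- Let n, m be positive integers, σ, b, b* > 0, and let D ∈ ℝ^{n×m} be a matrix each of whose columns has Euclidean norm 1. Define ρ(x,z) = ρ_ε(x − Dz) · ρ_Z(z) with ρ_ε(v) = (2πσ²)^{−n/2} · exp(−‖v‖₂²/(2σ²)) and ρ_Z(z) = (2b)^{−m} · exp(−‖z‖₁/b), and f(x,z) = (1/(2σ²)) · ‖Dz − x‖₂² + (1/b) · ‖z‖₁. Fix x ∈ ℝⁿ, let z* ∈ ℝᵐ be a global minimizer of z ↦ f(x,z), let q(z) = (2b*)^{−m} · exp(−‖z − z*‖₁/b*), and let C(σ, b, b*) = −(n/2)·log(2πσ²) + m·log(b*/b) + m. Then the gap between ELBO(q)(x) and its lower bound satisfies ELBO(q)(x) − (−f(x, z*) − m·(b*)²/σ² − m·(b*/b) + C(σ, b, b*)) ≤ (b*/b) · ‖z*‖₀.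 -/
open MeasureTheory Real Finset

private lemma elbo_int_Ioi {bs : ℝ} (hbs : 0 < bs) (k : ℕ) :
    ∫ t in Set.Ioi (0:ℝ), t ^ k * Real.exp (-(t / bs)) = bs ^ (k+1) * k.factorial := by
  have h := Real.integral_rpow_mul_exp_neg_mul_Ioi (a := (k:ℝ)+1) (r := 1/bs)
    (by positivity) (by positivity)
  rw [show ∫ t in Set.Ioi (0:ℝ), t ^ k * Real.exp (-(t / bs))
      = ∫ t in Set.Ioi (0:ℝ), t ^ ((k:ℝ)+1-1) * Real.exp (-(1/bs * t)) from
    setIntegral_congr_fun measurableSet_Ioi (fun t ht => by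
      rw [show (k:ℝ)+1-1 = (k:ℝ) by ring, Real.rpow_natCast, one_div, inv_mul_eq_div]), h,
    one_div_one_div]
  have h2 : Real.Gamma ((k:ℝ)+1) = k.factorial := Real.Gamma_nat_eq_factorial k
  have h3 : bs ^ ((k:ℝ)+1) = bs ^ (k+1) := by
    rw [show ((k:ℝ)+1) = ((k+1:ℕ):ℝ) by push_cast; ring, Real.rpow_natCast]
  rw [h2, h3]

private lemma elbo_intOn_Ioi {bs : ℝ} (hbs : 0 < bs) (k : ℕ) :
    IntegrableOn (fun t : ℝ => t ^ k * Real.exp (-(t / bs))) (Set.Ioi 0) := by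
  have h := integrableOn_rpow_mul_exp_neg_mul_rpow (p := 1) (s := (k:ℝ)) (b := 1/bs)
    (by exact lt_of_lt_of_le neg_one_lt_zero (Nat.cast_nonneg k)) zero_lt_one (by positivity)
  exact h.congr_fun (fun t ht => by
    beta_reduce; rw [Real.rpow_natCast, Real.rpow_one]; congr 1; ring) measurableSet_Ioi

private lemma elbo_integrable_comp_abs {f : ℝ → ℝ}
    (hf : IntegrableOn (fun x => f |x|) (Set.Ioi 0)) :
    Integrable fun x : ℝ => f |x| := by
  have int_Iic : IntegrableOn (fun x : ℝ => f |x|) (Set.Iic 0) := by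
    rw [← Measure.map_neg_eq_self (volume : Measure ℝ)]
    have m : MeasurableEmbedding fun x : ℝ => -x := (Homeomorph.neg ℝ).measurableEmbedding
    rw [m.integrableOn_map_iff]
    simp_rw [Function.comp_def, abs_neg, Set.neg_preimage, Set.neg_Iic, neg_zero]
    exact Iff.mpr integrableOn_Ici_iff_integrableOn_Ioi hf
  rw [← integrableOn_univ, ← Set.Iic_union_Ioi (a := (0:ℝ))]
  exact int_Iic.union hf

private lemma elbo_int_abs {bs : ℝ} (hbs : 0 < bs) (k : ℕ) :
    Integrable (fun t : ℝ => |t| ^ k * Real.exp (-(|t| / bs))) := by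
  exact elbo_integrable_comp_abs (f := fun y => y ^ k * Real.exp (-(y / bs)))
    ((elbo_intOn_Ioi hbs k).congr_fun (fun t ht => by
      rw [abs_of_pos (Set.mem_Ioi.mp ht)]) measurableSet_Ioi)

private lemma elbo_integral_abs {bs : ℝ} (hbs : 0 < bs) (k : ℕ) :
    ∫ t : ℝ, |t| ^ k * Real.exp (-(|t| / bs)) = 2 * (bs ^ (k+1) * k.factorial) := by
  rw [integral_comp_abs (f := fun y => y ^ k * Real.exp (-(y / bs))),
    elbo_int_Ioi hbs k]

private lemma elbo_integral_odd {bs : ℝ} :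
    ∫ t : ℝ, t * Real.exp (-(|t| / bs)) = 0 := by
  have h := integral_neg_eq_self (fun t : ℝ => t * Real.exp (-(|t| / bs))) volume
  simp only [abs_neg, neg_mul] at h
  have := integral_neg (f := fun t : ℝ => t * Real.exp (-(|t| / bs))) (μ := volume)
  rw [this] at h
  linarith




section OneDim

variable {bs : ℝ} (hbs : 0 < bs) (c : ℝ)
include hbs
set_option linter.unusedSectionVars false

private lemma elbo_shift_int (k : ℕ) :
    Integrable (fun t : ℝ => |t - c| ^ k * Real.exp (-(|t - c| / bs))) :=
  (elbo_int_abs hbs k).comp_sub_right c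

private lemma elbo_shift_integral (k : ℕ) :
    ∫ t : ℝ, |t - c| ^ k * Real.exp (-(|t - c| / bs)) = 2 * (bs ^ (k+1) * k.factorial) := by
  rw [integral_sub_right_eq_self (fun t : ℝ => |t| ^ k * Real.exp (-(|t| / bs))) c]
  exact elbo_integral_abs hbs k

private lemma elbo_exp_int : Integrable (fun t : ℝ => Real.exp (-(|t - c| / bs))) := by
  simpa using elbo_shift_int hbs c 0

private lemma elbo_exp_integral : ∫ t : ℝ, Real.exp (-(|t - c| / bs)) = 2 * bs := by
  have := elbo_shift_integral hbs c 0
  simpa using this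

private lemma elbo_lin_int : Integrable (fun t : ℝ => (t - c) * Real.exp (-(|t - c| / bs))) := by
  have base : Integrable (fun t : ℝ => t * Real.exp (-(|t| / bs))) := by
    refine (elbo_int_abs hbs 1).mono' ((continuous_id.mul (by fun_prop : Continuous fun t : ℝ => Real.exp (-(|t| / bs)))).aestronglyMeasurable) ?_
    filter_upwards with t
    rw [Real.norm_eq_abs, abs_mul, abs_of_pos (Real.exp_pos _), pow_one]
  exact base.comp_sub_right c

private lemma elbo_lin_integral : ∫ t : ℝ, (t - c) * Real.exp (-(|t - c| / bs)) = 0 := by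
  rw [integral_sub_right_eq_self (fun t : ℝ => t * Real.exp (-(|t| / bs))) c]
  exact elbo_integral_odd

private lemma elbo_id_int : Integrable (fun t : ℝ => t * Real.exp (-(|t - c| / bs))) := by
  have : (fun t : ℝ => t * Real.exp (-(|t - c| / bs)))
      = fun t : ℝ => (t - c) * Real.exp (-(|t - c| / bs)) + c * Real.exp (-(|t - c| / bs)) := by
    funext t; ring
  rw [this]
  exact (elbo_lin_int hbs c).add ((elbo_exp_int hbs c).const_mul c)

private lemma elbo_id_integral : ∫ t : ℝ, t * Real.exp (-(|t - c| / bs)) = 2 * bs * c := by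
  have : (fun t : ℝ => t * Real.exp (-(|t - c| / bs)))
      = fun t : ℝ => (t - c) * Real.exp (-(|t - c| / bs)) + c * Real.exp (-(|t - c| / bs)) := by
    funext t; ring
  rw [this, integral_add (elbo_lin_int hbs c) ((elbo_exp_int hbs c).const_mul c),
    elbo_lin_integral hbs c, integral_const_mul, elbo_exp_integral hbs c]
  ring

private lemma elbo_sq_integral :
    ∫ t : ℝ, (t - c) ^ 2 * Real.exp (-(|t - c| / bs)) = 4 * bs ^ 3 := by
  have : (fun t : ℝ => (t - c) ^ 2 * Real.exp (-(|t - c| / bs)))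
      = fun t : ℝ => |t - c| ^ 2 * Real.exp (-(|t - c| / bs)) := by
    funext t; rw [sq_abs]
  rw [this, elbo_shift_integral hbs c 2]
  norm_num; ring

private lemma elbo_sq_int :
    Integrable (fun t : ℝ => (t - c) ^ 2 * Real.exp (-(|t - c| / bs))) := by
  have : (fun t : ℝ => (t - c) ^ 2 * Real.exp (-(|t - c| / bs)))
      = fun t : ℝ => |t - c| ^ 2 * Real.exp (-(|t - c| / bs)) := by
    funext t; rw [sq_abs]
  rw [this]; exact elbo_shift_int hbs c 2

private lemma elbo_abs_integral :
    ∫ t : ℝ, |t - c| * Real.exp (-(|t - c| / bs)) = 2 * bs ^ 2 := by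
  have := elbo_shift_integral hbs c 1
  simpa using this

private lemma elbo_abs_int :
    Integrable (fun t : ℝ => |t - c| * Real.exp (-(|t - c| / bs))) := by
  simpa using elbo_shift_int hbs c 1

private lemma elbo_absid_int :
    Integrable (fun t : ℝ => |t| * Real.exp (-(|t - c| / bs))) := by
  refine ((elbo_abs_int hbs c).add ((elbo_exp_int hbs c).const_mul |c|)).mono'
    ((continuous_abs.mul (by fun_prop : Continuous fun t : ℝ => Real.exp (-(|t - c| / bs)))).aestronglyMeasurable) ?_
  filter_upwards with t
  simp only [Pi.add_apply]
  rw [Real.norm_eq_abs, abs_mul, abs_abs, abs_of_pos (Real.exp_pos _)]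
  have h1 : |t| ≤ |t - c| + |c| := by
    calc |t| = |t - c + c| := by ring_nf
    _ ≤ |t - c| + |c| := abs_add_le _ _
  nlinarith [Real.exp_pos (-(|t - c| / bs)), h1, abs_nonneg (t - c), abs_nonneg c]

private lemma elbo_absid_integral_ge :
    2 * bs * |c| ≤ ∫ t : ℝ, |t| * Real.exp (-(|t - c| / bs)) := by
  have h1 : |∫ t : ℝ, t * Real.exp (-(|t - c| / bs))| ≤
      ∫ t : ℝ, |t| * Real.exp (-(|t - c| / bs)) := by
    have := norm_integral_le_integral_norm (f := fun t : ℝ => t * Real.exp (-(|t - c| / bs)))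
      (μ := volume)
    simpa [Real.norm_eq_abs, abs_mul, abs_of_pos (Real.exp_pos _)] using this
  rw [elbo_id_integral hbs c] at h1
  calc 2 * bs * |c| = |2 * bs * c| := by
        rw [abs_mul, abs_of_pos (by positivity : (0:ℝ) < 2 * bs)]
  _ ≤ _ := h1

end OneDim



section OneDimNorm

variable {bs : ℝ} (hbs : 0 < bs) (c : ℝ)


include hbs

private lemma elboN_int : Integrable (fun t : ℝ => (2*bs)⁻¹ * Real.exp (-(|t - c| / bs))) :=
  (elbo_exp_int hbs c).const_mul _

private lemma elboN_integral : ∫ t : ℝ, (2*bs)⁻¹ * Real.exp (-(|t - c| / bs)) = 1 := by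
  rw [integral_const_mul, elbo_exp_integral hbs c]
  field_simp

private lemma elboN_lin_int :
    Integrable (fun t : ℝ => ((2*bs)⁻¹ * Real.exp (-(|t - c| / bs))) * (t - c)) := by
  have h : (fun t : ℝ => ((2*bs)⁻¹ * Real.exp (-(|t - c| / bs))) * (t - c))
      = fun t : ℝ => (2*bs)⁻¹ * ((t - c) * Real.exp (-(|t - c| / bs))) := by funext t; ring
  rw [h]; exact (elbo_lin_int hbs c).const_mul _

private lemma elboN_lin_integral :
    ∫ t : ℝ, ((2*bs)⁻¹ * Real.exp (-(|t - c| / bs))) * (t - c) = 0 := by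
  have h : (fun t : ℝ => ((2*bs)⁻¹ * Real.exp (-(|t - c| / bs))) * (t - c))
      = fun t : ℝ => (2*bs)⁻¹ * ((t - c) * Real.exp (-(|t - c| / bs))) := by funext t; ring
  rw [h, integral_const_mul, elbo_lin_integral hbs c, mul_zero]

private lemma elboN_sq_int :
    Integrable (fun t : ℝ => ((2*bs)⁻¹ * Real.exp (-(|t - c| / bs))) * (t - c)^2) := by
  have h : (fun t : ℝ => ((2*bs)⁻¹ * Real.exp (-(|t - c| / bs))) * (t - c)^2)
      = fun t : ℝ => (2*bs)⁻¹ * ((t - c)^2 * Real.exp (-(|t - c| / bs))) := by funext t; ring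
  rw [h]; exact (elbo_sq_int hbs c).const_mul _

private lemma elboN_sq_integral :
    ∫ t : ℝ, ((2*bs)⁻¹ * Real.exp (-(|t - c| / bs))) * (t - c)^2 = 2 * bs^2 := by
  have h : (fun t : ℝ => ((2*bs)⁻¹ * Real.exp (-(|t - c| / bs))) * (t - c)^2)
      = fun t : ℝ => (2*bs)⁻¹ * ((t - c)^2 * Real.exp (-(|t - c| / bs))) := by funext t; ring
  rw [h, integral_const_mul, elbo_sq_integral hbs c]
  field_simp; ring

private lemma elboN_abs_int :
    Integrable (fun t : ℝ => ((2*bs)⁻¹ * Real.exp (-(|t - c| / bs))) * |t - c|) := by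
  have h : (fun t : ℝ => ((2*bs)⁻¹ * Real.exp (-(|t - c| / bs))) * |t - c|)
      = fun t : ℝ => (2*bs)⁻¹ * (|t - c| * Real.exp (-(|t - c| / bs))) := by funext t; ring
  rw [h]; exact (elbo_abs_int hbs c).const_mul _

private lemma elboN_abs_integral :
    ∫ t : ℝ, ((2*bs)⁻¹ * Real.exp (-(|t - c| / bs))) * |t - c| = bs := by
  have h : (fun t : ℝ => ((2*bs)⁻¹ * Real.exp (-(|t - c| / bs))) * |t - c|)
      = fun t : ℝ => (2*bs)⁻¹ * (|t - c| * Real.exp (-(|t - c| / bs))) := by funext t; ring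
  rw [h, integral_const_mul, elbo_abs_integral hbs c]
  field_simp

private lemma elboN_id_int :
    Integrable (fun t : ℝ => ((2*bs)⁻¹ * Real.exp (-(|t - c| / bs))) * t) := by
  have h : (fun t : ℝ => ((2*bs)⁻¹ * Real.exp (-(|t - c| / bs))) * t)
      = fun t : ℝ => (2*bs)⁻¹ * (t * Real.exp (-(|t - c| / bs))) := by funext t; ring
  rw [h]; exact (elbo_id_int hbs c).const_mul _

private lemma elboN_id_integral :
    ∫ t : ℝ, ((2*bs)⁻¹ * Real.exp (-(|t - c| / bs))) * t = c := by
  have h : (fun t : ℝ => ((2*bs)⁻¹ * Real.exp (-(|t - c| / bs))) * t)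
      = fun t : ℝ => (2*bs)⁻¹ * (t * Real.exp (-(|t - c| / bs))) := by funext t; ring
  rw [h, integral_const_mul, elbo_id_integral hbs c]
  field_simp

private lemma elboN_absid_int :
    Integrable (fun t : ℝ => ((2*bs)⁻¹ * Real.exp (-(|t - c| / bs))) * |t|) := by
  have h : (fun t : ℝ => ((2*bs)⁻¹ * Real.exp (-(|t - c| / bs))) * |t|)
      = fun t : ℝ => (2*bs)⁻¹ * (|t| * Real.exp (-(|t - c| / bs))) := by funext t; ring
  rw [h]; exact (elbo_absid_int hbs c).const_mul _

private lemma elboN_absid_integral_ge :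
    |c| ≤ ∫ t : ℝ, ((2*bs)⁻¹ * Real.exp (-(|t - c| / bs))) * |t| := by
  have h : (fun t : ℝ => ((2*bs)⁻¹ * Real.exp (-(|t - c| / bs))) * |t|)
      = fun t : ℝ => (2*bs)⁻¹ * (|t| * Real.exp (-(|t - c| / bs))) := by funext t; ring
  rw [h, integral_const_mul]
  have h1 := elbo_absid_integral_ge hbs c
  have h2 : (2*bs)⁻¹ * (2 * bs * |c|) ≤ (2*bs)⁻¹ * ∫ t : ℝ, |t| * Real.exp (-(|t - c| / bs)) :=
    mul_le_mul_of_nonneg_left h1 (by positivity)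
  calc |c| = (2*bs)⁻¹ * (2 * bs * |c|) := by field_simp
  _ ≤ _ := h2

end OneDimNorm



private lemma elbo_upd_prod {m : ℕ} (f : Fin m → ℝ) (i₀ : Fin m) (a : ℝ) :
    ∏ i, Function.update f i₀ a i = a * ∏ i ∈ Finset.univ.erase i₀, f i := by
  rw [Finset.prod_update_of_mem (Finset.mem_univ i₀), Finset.sdiff_singleton_eq_erase]

private lemma elbo_upd_prod2 {m : ℕ} (f : Fin m → ℝ) (i₀ k₀ : Fin m) (hik : i₀ ≠ k₀)
    (a b : ℝ) :
    ∏ i, Function.update (Function.update f i₀ a) k₀ b i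
      = b * (a * ∏ i ∈ (Finset.univ.erase k₀).erase i₀, f i) := by
  rw [Finset.prod_update_of_mem (Finset.mem_univ k₀), Finset.sdiff_singleton_eq_erase,
    Finset.prod_update_of_mem (Finset.mem_erase.mpr ⟨hik, Finset.mem_univ i₀⟩),
    Finset.sdiff_singleton_eq_erase]

section ProdLayer
set_option linter.unusedSectionVars false

variable {m : ℕ} (g : Fin m → ℝ → ℝ) (hg : ∀ i, Integrable (g i))
  (hg1 : ∀ i, ∫ t, g i t = 1)

include hg in
private lemma elbo_q_integrable : Integrable (fun z : Fin m → ℝ => ∏ i, g i (z i)) :=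
  Integrable.fintype_prod hg

include hg1 in
private lemma elbo_q_integral : ∫ z : Fin m → ℝ, ∏ i, g i (z i) = 1 := by
  rw [MeasureTheory.integral_fintype_prod_volume_eq_prod]
  simp [hg1]

variable (i₀ : Fin m) (F : ℝ → ℝ) (hF : Integrable (fun t => g i₀ t * F t))

private lemma elbo_single_fun (z : Fin m → ℝ) :
    (∏ i, g i (z i)) * F (z i₀)
      = ∏ i, (Function.update g i₀ (fun t => g i₀ t * F t)) i (z i) := by
  have h : (fun i => (Function.update g i₀ (fun t => g i₀ t * F t)) i (z i))
      = Function.update (fun i => g i (z i)) i₀ (g i₀ (z i₀) * F (z i₀)) := by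
    funext i
    by_cases h : i = i₀
    · subst h; simp
    · simp [Function.update_of_ne h]
  rw [h, elbo_upd_prod, ← Finset.mul_prod_erase Finset.univ (fun i => g i (z i))
    (Finset.mem_univ i₀)]
  ring

include hg hF in
private lemma elbo_single_integrable :
    Integrable (fun z : Fin m → ℝ => (∏ i, g i (z i)) * F (z i₀)) := by
  have : (fun z : Fin m → ℝ => (∏ i, g i (z i)) * F (z i₀))
      = fun z => ∏ i, (Function.update g i₀ (fun t => g i₀ t * F t)) i (z i) := by
    funext z; exact elbo_single_fun g i₀ F z
  rw [this]
  refine Integrable.fintype_prod fun i => ?_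
  by_cases h : i = i₀
  · subst h; simpa using hF
  · simpa [Function.update_of_ne h] using hg i

include hg hg1 hF in
private lemma elbo_single_integral :
    ∫ z : Fin m → ℝ, (∏ i, g i (z i)) * F (z i₀) = ∫ t, g i₀ t * F t := by
  have h1 : (fun z : Fin m → ℝ => (∏ i, g i (z i)) * F (z i₀))
      = fun z => ∏ i, (Function.update g i₀ (fun t => g i₀ t * F t)) i (z i) := by
    funext z; exact elbo_single_fun g i₀ F z
  rw [h1, MeasureTheory.integral_fintype_prod_volume_eq_prod]
  have h2 : (fun i => ∫ t, (Function.update g i₀ (fun t => g i₀ t * F t)) i t)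
      = Function.update (fun i => ∫ t, g i t) i₀ (∫ t, g i₀ t * F t) := by
    funext i
    by_cases h : i = i₀
    · subst h; simp
    · simp [Function.update_of_ne h]
  rw [h2, elbo_upd_prod]
  have : ∏ i ∈ Finset.univ.erase i₀, ∫ t, g i t = 1 :=
    Finset.prod_eq_one fun i _ => hg1 i
  rw [this, mul_one]

variable (k₀ : Fin m) (hik : i₀ ≠ k₀) (G : ℝ → ℝ) (hG : Integrable (fun t => g k₀ t * G t))

include hik in
private lemma elbo_double_fun (z : Fin m → ℝ) :
    (∏ i, g i (z i)) * (F (z i₀) * G (z k₀))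
      = ∏ i, (Function.update (Function.update g i₀ (fun t => g i₀ t * F t)) k₀
          (fun t => g k₀ t * G t)) i (z i) := by
  have h : (fun i => (Function.update (Function.update g i₀ (fun t => g i₀ t * F t)) k₀
        (fun t => g k₀ t * G t)) i (z i))
      = Function.update (Function.update (fun i => g i (z i)) i₀ (g i₀ (z i₀) * F (z i₀))) k₀
          (g k₀ (z k₀) * G (z k₀)) := by
    funext i
    by_cases h : i = k₀
    · subst h; simp
    · by_cases h' : i = i₀
      · subst h'
        simp [Function.update_of_ne h, Function.update_of_ne h]
      · simp [Function.update_of_ne h, Function.update_of_ne h']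
  rw [h, elbo_upd_prod2 _ _ _ hik,
    ← Finset.mul_prod_erase Finset.univ (fun i => g i (z i)) (Finset.mem_univ k₀),
    ← Finset.mul_prod_erase (Finset.univ.erase k₀) (fun i => g i (z i))
      (Finset.mem_erase.mpr ⟨hik, Finset.mem_univ i₀⟩)]
  ring

include hg hF hG hik in
private lemma elbo_double_integrable :
    Integrable (fun z : Fin m → ℝ => (∏ i, g i (z i)) * (F (z i₀) * G (z k₀))) := by
  have h1 : (fun z : Fin m → ℝ => (∏ i, g i (z i)) * (F (z i₀) * G (z k₀)))
      = fun z => ∏ i, (Function.update (Function.update g i₀ (fun t => g i₀ t * F t)) k₀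
          (fun t => g k₀ t * G t)) i (z i) := by
    funext z; exact elbo_double_fun g i₀ F k₀ hik G z
  rw [h1]
  refine Integrable.fintype_prod fun i => ?_
  by_cases h : i = k₀
  · subst h; simpa using hG
  · by_cases h' : i = i₀
    · subst h'
      simpa [Function.update_of_ne h] using hF
    · simpa [Function.update_of_ne h, Function.update_of_ne h'] using hg i

include hg hg1 hF hG hik in
private lemma elbo_double_integral :
    ∫ z : Fin m → ℝ, (∏ i, g i (z i)) * (F (z i₀) * G (z k₀))
      = (∫ t, g i₀ t * F t) * (∫ t, g k₀ t * G t) := by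
  have h1 : (fun z : Fin m → ℝ => (∏ i, g i (z i)) * (F (z i₀) * G (z k₀)))
      = fun z => ∏ i, (Function.update (Function.update g i₀ (fun t => g i₀ t * F t)) k₀
          (fun t => g k₀ t * G t)) i (z i) := by
    funext z; exact elbo_double_fun g i₀ F k₀ hik G z
  rw [h1, MeasureTheory.integral_fintype_prod_volume_eq_prod]
  have h2 : (fun i => ∫ t, (Function.update (Function.update g i₀ (fun t => g i₀ t * F t)) k₀
        (fun t => g k₀ t * G t)) i t)
      = Function.update (Function.update (fun i => ∫ t, g i t) i₀ (∫ t, g i₀ t * F t)) k₀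
          (∫ t, g k₀ t * G t) := by
    funext i
    by_cases h : i = k₀
    · subst h; simp
    · by_cases h' : i = i₀
      · subst h'
        simp [Function.update_of_ne h]
      · simp [Function.update_of_ne h, Function.update_of_ne h']
  rw [h2, elbo_upd_prod2 _ _ _ hik]
  have : ∏ i ∈ (Finset.univ.erase k₀).erase i₀, ∫ t, g i t = 1 :=
    Finset.prod_eq_one fun i _ => hg1 i
  rw [this, mul_one]
  ring

end ProdLayer


/-- The gap between the ELBO and its lower bound is at most `(b*/b)·‖z*‖₀`:
`ELBO(q)(x) − (−f(x,z*) − m·(b*)²/σ² − m·(b*/b) + C(σ,b,b*)) ≤ (b*/b)·‖z*‖₀`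
where `z*` is a global minimizer of `z ↦ f(x,z)`, `D` has unit-norm columns, and
`C(σ,b,b*) = −(n/2)·log(2πσ²) + m·log(b*/b) + m`. -/
theorem elbo_gap_le (n m : ℕ) (hn : 0 < n) (hm : 0 < m)
    (σ b bs : ℝ) (hσ : 0 < σ) (hb : 0 < b) (hbs : 0 < bs)
    (D : Matrix (Fin n) (Fin m) ℝ)
    (hD : ∀ i, ∑ j, (D j i) ^ 2 = 1)
    (ρε : (Fin n → ℝ) → ℝ)
    (hρε : ∀ v, ρε v =
      (2 * Real.pi * σ ^ 2) ^ (-(n : ℝ) / 2) * Real.exp (-(∑ j, (v j) ^ 2) / (2 * σ ^ 2)))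
    (ρZ : (Fin m → ℝ) → ℝ)
    (hρZ : ∀ z, ρZ z = ((2 * b) ^ m)⁻¹ * Real.exp (-(∑ i, |z i|) / b))
    (ρ : (Fin n → ℝ) → (Fin m → ℝ) → ℝ)
    (hρ : ∀ x z, ρ x z = ρε (fun j => x j - ∑ i, D j i * z i) * ρZ z)
    (f : (Fin n → ℝ) → (Fin m → ℝ) → ℝ)
    (hf : ∀ x z, f x z =
      1 / (2 * σ ^ 2) * (∑ j, ((∑ i, D j i * z i) - x j) ^ 2) + (1 / b) * (∑ i, |z i|))
    (x : Fin n → ℝ) (zs : Fin m → ℝ)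
    (hzs : ∀ z : Fin m → ℝ, f x zs ≤ f x z)
    (q : (Fin m → ℝ) → ℝ)
    (hq : ∀ z, q z = ((2 * bs) ^ m)⁻¹ * Real.exp (-(∑ i, |z i - zs i|) / bs)) :
    (∫ z : Fin m → ℝ, q z * Real.log (ρ x z / q z)) -
        (-f x zs - (m : ℝ) * bs ^ 2 / σ ^ 2 - (m : ℝ) * (bs / b) +
          (-((n : ℝ) / 2) * Real.log (2 * Real.pi * σ ^ 2)
            + (m : ℝ) * Real.log (bs / b) + m)) ≤
      (bs / b) * ((Finset.univ.filter fun i => zs i ≠ 0).card : ℝ) := by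
  have hσ2 : (0:ℝ) < σ^2 := by positivity
  have h2πσ : (0:ℝ) < 2 * Real.pi * σ^2 := by positivity
  set g : Fin m → ℝ → ℝ := fun i t => (2*bs)⁻¹ * Real.exp (-(|t - zs i| / bs)) with hgdef
  have hgq : ∀ z : Fin m → ℝ, q z = ∏ i, g i (z i) := by
    intro z
    rw [hq]
    have h1 : ∏ i, g i (z i)
        = ((2*bs)⁻¹)^m * Real.exp (∑ i : Fin m, -(|z i - zs i| / bs)) := by
      simp only [hgdef]
      rw [Finset.prod_mul_distrib, Finset.prod_const, Real.exp_sum, Finset.card_univ,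
        Fintype.card_fin]
    rw [h1, inv_pow]
    congr 1
    rw [neg_div, Finset.sum_div, ← Finset.sum_neg_distrib]
  have hgInt : ∀ i, Integrable (g i) := fun i => elboN_int hbs (zs i)
  have hg1 : ∀ i, ∫ t, g i t = 1 := fun i => elboN_integral hbs (zs i)
  have hqInt : Integrable q :=
    (elbo_q_integrable g hgInt).congr (Filter.Eventually.of_forall fun z => (hgq z).symm)
  have hq1 : ∫ z : Fin m → ℝ, q z = 1 := by
    rw [show q = fun z => ∏ i, g i (z i) from funext hgq]
    exact elbo_q_integral g hg1
  have hqnn : ∀ z, 0 ≤ q z := fun z => by rw [hq]; positivity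
  -- single coordinate integrals
  have hMeanInt : ∀ i, Integrable (fun z : Fin m → ℝ => q z * (z i - zs i)) := by
    intro i
    rw [show (fun z : Fin m → ℝ => q z * (z i - zs i))
        = fun z => (∏ j, g j (z j)) * ((fun t => t - zs i) (z i)) from
      funext fun z => by rw [hgq z]]
    exact elbo_single_integrable g hgInt i _ (elboN_lin_int hbs (zs i))
  have hMean : ∀ i, ∫ z : Fin m → ℝ, q z * (z i - zs i) = 0 := by
    intro i
    rw [show (fun z : Fin m → ℝ => q z * (z i - zs i))
        = fun z => (∏ j, g j (z j)) * ((fun t => t - zs i) (z i)) from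
      funext fun z => by rw [hgq z]]
    rw [elbo_single_integral g hgInt hg1 i _ (elboN_lin_int hbs (zs i))]
    exact elboN_lin_integral hbs (zs i)
  have hAbsWInt : ∀ i, Integrable (fun z : Fin m → ℝ => q z * |z i - zs i|) := by
    intro i
    rw [show (fun z : Fin m → ℝ => q z * |z i - zs i|)
        = fun z => (∏ j, g j (z j)) * ((fun t => |t - zs i|) (z i)) from
      funext fun z => by rw [hgq z]]
    exact elbo_single_integrable g hgInt i _ (elboN_abs_int hbs (zs i))
  have hAbsW : ∀ i, ∫ z : Fin m → ℝ, q z * |z i - zs i| = bs := by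
    intro i
    rw [show (fun z : Fin m → ℝ => q z * |z i - zs i|)
        = fun z => (∏ j, g j (z j)) * ((fun t => |t - zs i|) (z i)) from
      funext fun z => by rw [hgq z]]
    rw [elbo_single_integral g hgInt hg1 i _ (elboN_abs_int hbs (zs i))]
    exact elboN_abs_integral hbs (zs i)
  have hAbsZInt : ∀ i, Integrable (fun z : Fin m → ℝ => q z * |z i|) := by
    intro i
    rw [show (fun z : Fin m → ℝ => q z * |z i|)
        = fun z => (∏ j, g j (z j)) * ((fun t => |t|) (z i)) from
      funext fun z => by rw [hgq z]]
    exact elbo_single_integrable g hgInt i _ (elboN_absid_int hbs (zs i))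
  have hIdVal : ∀ i, ∫ z : Fin m → ℝ, q z * z i = zs i := by
    intro i
    rw [show (fun z : Fin m → ℝ => q z * z i)
        = fun z => (∏ j, g j (z j)) * ((fun t => t) (z i)) from
      funext fun z => by rw [hgq z]]
    rw [elbo_single_integral g hgInt hg1 i _ (elboN_id_int hbs (zs i))]
    exact elboN_id_integral hbs (zs i)
  have hAbsZ_ge : ∀ i, |zs i| ≤ ∫ z : Fin m → ℝ, q z * |z i| := by
    intro i
    have h1 := norm_integral_le_integral_norm (f := fun z : Fin m → ℝ => q z * z i) (μ := volume)
    rw [hIdVal i] at h1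
    calc |zs i| ≤ ∫ z : Fin m → ℝ, ‖q z * z i‖ := by
          simpa [Real.norm_eq_abs] using h1
    _ = ∫ z : Fin m → ℝ, q z * |z i| := by
          congr 1; funext z
          rw [Real.norm_eq_abs, abs_mul, abs_of_nonneg (hqnn z)]
  have hAbsZ_eq : ∀ i, zs i = 0 → ∫ z : Fin m → ℝ, q z * |z i| = bs := by
    intro i h0
    have := hAbsW i
    rw [show (fun z : Fin m → ℝ => q z * |z i - zs i|) = fun z => q z * |z i| from
      funext fun z => by rw [h0, sub_zero]] at this
    exact this
  -- second moments
  have hMInt : ∀ i k, Integrable (fun z : Fin m → ℝ => q z * ((z i - zs i) * (z k - zs k))) := by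
    intro i k
    by_cases h : i = k
    · subst h
      rw [show (fun z : Fin m → ℝ => q z * ((z i - zs i) * (z i - zs i)))
          = fun z => (∏ j, g j (z j)) * ((fun t => (t - zs i)^2) (z i)) from
        funext fun z => by rw [hgq z]; ring]
      exact elbo_single_integrable g hgInt i _ (elboN_sq_int hbs (zs i))
    · rw [show (fun z : Fin m → ℝ => q z * ((z i - zs i) * (z k - zs k)))
          = fun z => (∏ j, g j (z j)) * ((fun t => t - zs i) (z i) * (fun t => t - zs k) (z k)) from
        funext fun z => by rw [hgq z]]
      exact elbo_double_integrable g hgInt i _ (elboN_lin_int hbs (zs i)) k h _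
        (elboN_lin_int hbs (zs k))
  have hMVal : ∀ i k, ∫ z : Fin m → ℝ, q z * ((z i - zs i) * (z k - zs k))
      = if i = k then 2*bs^2 else 0 := by
    intro i k
    by_cases h : i = k
    · subst h
      rw [if_pos rfl]
      rw [show (fun z : Fin m → ℝ => q z * ((z i - zs i) * (z i - zs i)))
          = fun z => (∏ j, g j (z j)) * ((fun t => (t - zs i)^2) (z i)) from
        funext fun z => by rw [hgq z]; ring]
      rw [elbo_single_integral g hgInt hg1 i _ (elboN_sq_int hbs (zs i))]
      exact elboN_sq_integral hbs (zs i)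
    · rw [if_neg h]
      rw [show (fun z : Fin m → ℝ => q z * ((z i - zs i) * (z k - zs k)))
          = fun z => (∏ j, g j (z j)) * ((fun t => t - zs i) (z i) * (fun t => t - zs k) (z k)) from
        funext fun z => by rw [hgq z]]
      rw [elbo_double_integral g hgInt hg1 i _ (elboN_lin_int hbs (zs i)) k h _
        (elboN_lin_int hbs (zs k)), elboN_lin_integral hbs (zs i), zero_mul]
  -- per-j quadratic
  have key : ∀ j : Fin n, (fun z : Fin m → ℝ =>
        q z * (((∑ i, D j i * zs i) - x j) + ∑ i, D j i * (z i - zs i))^2)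
      = fun z => ((∑ i, D j i * zs i) - x j)^2 * q z
          + (2*((∑ i, D j i * zs i) - x j)) * (∑ i, D j i * (q z * (z i - zs i)))
          + ∑ i, ∑ k, (D j i * D j k) * (q z * ((z i - zs i) * (z k - zs k))) := by
    intro j; funext z
    have h1 : (∑ i, D j i * (q z * (z i - zs i))) = q z * ∑ i, D j i * (z i - zs i) := by
      rw [Finset.mul_sum]; exact Finset.sum_congr rfl fun i _ => by ring
    have h2 : q z * (∑ i, D j i * (z i - zs i))^2
        = ∑ i, ∑ k, (D j i * D j k) * (q z * ((z i - zs i) * (z k - zs k))) := by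
      rw [sq, Finset.sum_mul_sum, Finset.mul_sum]
      refine Finset.sum_congr rfl fun i _ => ?_
      rw [Finset.mul_sum]
      exact Finset.sum_congr rfl fun k _ => by ring
    rw [h1, ← h2]
    ring
  have hLint : ∀ j : Fin n, Integrable (fun z : Fin m → ℝ =>
      q z * (((∑ i, D j i * zs i) - x j) + ∑ i, D j i * (z i - zs i))^2) := by
    intro j
    rw [key j]
    refine ((hqInt.const_mul _).add ((integrable_finset_sum _
      fun i _ => (hMeanInt i).const_mul (D j i)).const_mul _)).add ?_
    exact integrable_finset_sum _ fun i _ => integrable_finset_sum _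
      fun k _ => (hMInt i k).const_mul _
  have hLval : ∀ j : Fin n, ∫ z : Fin m → ℝ,
        q z * (((∑ i, D j i * zs i) - x j) + ∑ i, D j i * (z i - zs i))^2
      = ((∑ i, D j i * zs i) - x j)^2 + 2*bs^2 * ∑ i, (D j i)^2 := by
    intro j
    rw [key j]
    have i1 : Integrable (fun z : Fin m → ℝ =>
        ((∑ i, D j i * zs i) - x j)^2 * q z) := hqInt.const_mul _
    have i2 : Integrable (fun z : Fin m → ℝ =>
        (2*((∑ i, D j i * zs i) - x j)) * (∑ i, D j i * (q z * (z i - zs i)))) :=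
      (integrable_finset_sum _ fun i _ => (hMeanInt i).const_mul (D j i)).const_mul _
    have i3 : Integrable (fun z : Fin m → ℝ =>
        ∑ i, ∑ k, (D j i * D j k) * (q z * ((z i - zs i) * (z k - zs k)))) :=
      integrable_finset_sum _ fun i _ => integrable_finset_sum _
        fun k _ => (hMInt i k).const_mul _
    have i12 : Integrable (fun z : Fin m → ℝ =>
        ((∑ i, D j i * zs i) - x j)^2 * q z
          + (2*((∑ i, D j i * zs i) - x j)) * (∑ i, D j i * (q z * (z i - zs i)))) := i1.add i2
    rw [integral_add i12 i3, integral_add i1 i2,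
      integral_const_mul, integral_const_mul, hq1,
      integral_finset_sum _ (fun i _ => (hMeanInt i).const_mul (D j i)),
      integral_finset_sum _ (fun i _ => integrable_finset_sum _
        fun k _ => (hMInt i k).const_mul _)]
    have h3 : ∀ i : Fin m, ∫ z : Fin m → ℝ, D j i * (q z * (z i - zs i)) = 0 := by
      intro i; rw [integral_const_mul, hMean i, mul_zero]
    have h4 : ∀ i : Fin m, ∫ z : Fin m → ℝ,
        ∑ k, (D j i * D j k) * (q z * ((z i - zs i) * (z k - zs k)))
        = (D j i)^2 * (2*bs^2) := by
      intro i
      rw [integral_finset_sum _ (fun k _ => (hMInt i k).const_mul _)]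
      have : ∀ k : Fin m, ∫ z : Fin m → ℝ,
          (D j i * D j k) * (q z * ((z i - zs i) * (z k - zs k)))
          = (D j i * D j k) * (if i = k then 2*bs^2 else 0) := by
        intro k; rw [integral_const_mul, hMVal i k]
      rw [Finset.sum_congr rfl fun k _ => this k]
      simp only [mul_ite, mul_zero, Finset.sum_ite_eq, Finset.mem_univ, if_true]
      ring
    rw [Finset.sum_congr rfl fun i _ => h3 i, Finset.sum_congr rfl fun i _ => h4 i,
      Finset.sum_const, ← Finset.sum_mul]
    simp only [smul_zero, mul_zero, add_zero, mul_one]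
    ring
  -- quadratic rewrite
  have hrew : ∀ (j : Fin n) (z : Fin m → ℝ), (∑ i, D j i * z i) - x j
      = ((∑ i, D j i * zs i) - x j) + ∑ i, D j i * (z i - zs i) := by
    intro j z
    simp only [mul_sub, Finset.sum_sub_distrib]
    ring
  have hQfun : (fun z : Fin m → ℝ => q z * ∑ j, ((∑ i, D j i * z i) - x j)^2)
      = fun z => ∑ j, q z * (((∑ i, D j i * zs i) - x j) + ∑ i, D j i * (z i - zs i))^2 := by
    funext z
    rw [Finset.mul_sum]
    exact Finset.sum_congr rfl fun j _ => by rw [hrew j z]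
  have hQint : Integrable (fun z : Fin m → ℝ => q z * ∑ j, ((∑ i, D j i * z i) - x j)^2) := by
    rw [hQfun]; exact integrable_finset_sum _ fun j _ => hLint j
  have hQval : ∫ z : Fin m → ℝ, q z * ∑ j, ((∑ i, D j i * z i) - x j)^2
      = (∑ j, ((∑ i, D j i * zs i) - x j)^2) + 2*bs^2*m := by
    rw [hQfun, integral_finset_sum _ fun j _ => hLint j,
      Finset.sum_congr rfl fun j _ => hLval j, Finset.sum_add_distrib]
    congr 1
    rw [← Finset.mul_sum, Finset.sum_comm]
    rw [Finset.sum_congr rfl fun i (_ : i ∈ Finset.univ) => hD i]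
    rw [Finset.sum_const, Finset.card_univ, Fintype.card_fin]
    simp
  -- l1 terms
  have hZfun : (fun z : Fin m → ℝ => q z * ∑ i, |z i|) = fun z => ∑ i, q z * |z i| :=
    funext fun z => by rw [Finset.mul_sum]
  have hZint : Integrable (fun z : Fin m → ℝ => q z * ∑ i, |z i|) := by
    rw [hZfun]; exact integrable_finset_sum _ fun i _ => hAbsZInt i
  have hWfun : (fun z : Fin m → ℝ => q z * ∑ i, |z i - zs i|)
      = fun z => ∑ i, q z * |z i - zs i| := funext fun z => by rw [Finset.mul_sum]
  have hWint : Integrable (fun z : Fin m → ℝ => q z * ∑ i, |z i - zs i|) := by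
    rw [hWfun]; exact integrable_finset_sum _ fun i _ => hAbsWInt i
  have hWval : ∫ z : Fin m → ℝ, q z * ∑ i, |z i - zs i| = m * bs := by
    rw [hWfun, integral_finset_sum _ fun i _ => hAbsWInt i,
      Finset.sum_congr rfl fun i _ => hAbsW i, Finset.sum_const, Finset.card_univ,
      Fintype.card_fin, nsmul_eq_mul]
  have hZval_ge : (∑ i, |zs i|) + bs * ((Finset.univ.filter fun i => zs i = 0).card : ℝ)
      ≤ ∫ z : Fin m → ℝ, q z * ∑ i, |z i| := by
    rw [hZfun, integral_finset_sum _ fun i _ => hAbsZInt i]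
    have h6 : ∀ i : Fin m, |zs i| + (if zs i = 0 then bs else 0)
        ≤ ∫ z : Fin m → ℝ, q z * |z i| := by
      intro i
      by_cases h : zs i = 0
      · rw [if_pos h, hAbsZ_eq i h, h, abs_zero, zero_add]
      · rw [if_neg h, add_zero]
        exact hAbsZ_ge i
    calc (∑ i, |zs i|) + bs * ((Finset.univ.filter fun i => zs i = 0).card : ℝ)
        = ∑ i, (|zs i| + (if zs i = 0 then bs else 0)) := by
          rw [Finset.sum_add_distrib]
          congr 1
          rw [show (fun i => if zs i = 0 then bs else 0)
              = fun i => bs * (if zs i = 0 then (1:ℝ) else 0) from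
            funext fun i => by by_cases h : zs i = 0 <;> simp [h]]
          rw [← Finset.mul_sum, Finset.sum_boole]
    _ ≤ _ := Finset.sum_le_sum fun i _ => h6 i
  -- pointwise log identity
  have hlog : ∀ z : Fin m → ℝ, Real.log (ρ x z / q z)
      = (-((n:ℝ)/2) * Real.log (2*Real.pi*σ^2) - m * Real.log (2*b) + m * Real.log (2*bs))
        - f x z + (∑ i, |z i - zs i|) / bs := by
    intro z
    rw [hρ, hρε, hρZ, hq, hf]
    rw [Real.log_div (by positivity) (by positivity),
        Real.log_mul (by positivity) (by positivity),
        Real.log_mul (by positivity) (Real.exp_ne_zero _),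
        Real.log_mul (by positivity) (Real.exp_ne_zero _),
        Real.log_mul (by positivity) (Real.exp_ne_zero _),
        Real.log_rpow h2πσ, Real.log_inv, Real.log_inv, Real.log_pow, Real.log_pow,
        Real.log_exp, Real.log_exp, Real.log_exp]
    have hsum : ∑ j, (x j - ∑ i, D j i * z i)^2 = ∑ j, ((∑ i, D j i * z i) - x j)^2 :=
      Finset.sum_congr rfl fun j _ => by ring
    rw [hsum]
    push_cast
    field_simp
    ring
  have hint_fun : (fun z : Fin m → ℝ => q z * Real.log (ρ x z / q z))
      = fun z => (-((n:ℝ)/2) * Real.log (2*Real.pi*σ^2) - m * Real.log (2*b)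
            + m * Real.log (2*bs)) * q z
          - (1/(2*σ^2)) * (q z * ∑ j, ((∑ i, D j i * z i) - x j)^2)
          - (1/b) * (q z * ∑ i, |z i|) + (1/bs) * (q z * ∑ i, |z i - zs i|) := by
    funext z
    rw [hlog z, hf]
    ring
  have hIntegral : ∫ z : Fin m → ℝ, q z * Real.log (ρ x z / q z)
      = (-((n:ℝ)/2) * Real.log (2*Real.pi*σ^2) - m * Real.log (2*b) + m * Real.log (2*bs)) * 1
        - (1/(2*σ^2)) * ((∑ j, ((∑ i, D j i * zs i) - x j)^2) + 2*bs^2*m)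
        - (1/b) * (∫ z : Fin m → ℝ, q z * ∑ i, |z i|) + (1/bs) * (m*bs) := by
    have j1 : Integrable (fun z : Fin m → ℝ =>
        (-((n:ℝ)/2) * Real.log (2*Real.pi*σ^2) - m * Real.log (2*b)
          + m * Real.log (2*bs)) * q z) := hqInt.const_mul _
    have j2 : Integrable (fun z : Fin m → ℝ =>
        (1/(2*σ^2)) * (q z * ∑ j, ((∑ i, D j i * z i) - x j)^2)) := hQint.const_mul _
    have j3 : Integrable (fun z : Fin m → ℝ =>
        (1/b) * (q z * ∑ i, |z i|)) := hZint.const_mul _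
    have j4 : Integrable (fun z : Fin m → ℝ =>
        (1/bs) * (q z * ∑ i, |z i - zs i|)) := hWint.const_mul _
    have j12 : Integrable (fun z : Fin m → ℝ =>
        (-((n:ℝ)/2) * Real.log (2*Real.pi*σ^2) - m * Real.log (2*b)
          + m * Real.log (2*bs)) * q z
        - (1/(2*σ^2)) * (q z * ∑ j, ((∑ i, D j i * z i) - x j)^2)) := j1.sub j2
    have j123 : Integrable (fun z : Fin m → ℝ =>
        (-((n:ℝ)/2) * Real.log (2*Real.pi*σ^2) - m * Real.log (2*b)
          + m * Real.log (2*bs)) * q z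
        - (1/(2*σ^2)) * (q z * ∑ j, ((∑ i, D j i * z i) - x j)^2)
        - (1/b) * (q z * ∑ i, |z i|)) := j12.sub j3
    rw [hint_fun, integral_add j123 j4, integral_sub j12 j3, integral_sub j1 j2,
      integral_const_mul, integral_const_mul, integral_const_mul, integral_const_mul,
      hq1, hQval, hWval]
  -- final assembly
  rw [hIntegral, hf]
  have hcard : ((Finset.univ.filter fun i => zs i = 0).card : ℝ)
      + ((Finset.univ.filter fun i => zs i ≠ 0).card : ℝ) = m := by
    have := Finset.card_filter_add_card_filter_not
      (s := (Finset.univ : Finset (Fin m))) (p := fun i => zs i = 0)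
    have h7 : ((Finset.univ.filter fun i => zs i = 0).card
        + (Finset.univ.filter fun i => zs i ≠ 0).card) = m := by
      simpa [ne_eq, Finset.card_univ] using this
    exact_mod_cast h7
  have hlogdiff : Real.log (2*bs) - Real.log (2*b) = Real.log (bs/b) := by
    rw [show bs/b = (2*bs)/(2*b) from by field_simp, Real.log_div (by positivity)
      (by positivity)]
  set W := ∫ z : Fin m → ℝ, q z * ∑ i, |z i| with hWdef
  set A := ∑ j, ((∑ i, D j i * zs i) - x j)^2 with hAdef
  set S1 := ∑ i, |zs i| with hS1def
  set Z0 := ((Finset.univ.filter fun i => zs i = 0).card : ℝ) with hZ0def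
  set NE := ((Finset.univ.filter fun i => zs i ≠ 0).card : ℝ) with hNEdef
  have E1 : (1/(2*σ^2)) * (A + 2*bs^2*m) = (1/(2*σ^2))*A + (m:ℝ)*bs^2/σ^2 := by
    field_simp
  have E2 : (1/bs) * ((m:ℝ)*bs) = (m:ℝ) := by field_simp
  have E4 : (m:ℝ) * Real.log (2*bs) - m * Real.log (2*b) = m * Real.log (bs/b) := by
    rw [← hlogdiff]; ring
  have hWge : (1/b) * (S1 + bs * Z0) ≤ (1/b) * W :=
    mul_le_mul_of_nonneg_left hZval_ge (by positivity)
  have E3 : (1/b) * (S1 + bs * Z0) = (1/b)*S1 + (bs/b)*Z0 := by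
    field_simp
  have E5 : (bs/b)*Z0 + (bs/b)*NE = (bs/b)*(m:ℝ) := by
    rw [← mul_add, hcard]
  linarith [hWge, E1, E2, E3, E4, E5]
end
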